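/- arXiv:1805.05991 — 7 statements merged into one kernel-verified Lean document; each statement's English description precedes it below -/
import Mathlib

section
/- Let M be a set equipped with a pseudo-distance function d, let E ⊆ M be nonempty, and let (Σ^j)_j and Σ^∞ be time-varying systems on M, each having the existence and uniqueness property of solutions, with flows Φ^j and Φ^∞ (which in particular satisfy Φ(t₀,t₀,x₀) = x₀ and the cocycle identity Φ(t,s,Φ(s,t₀,x₀)) = Φ(t,t₀,x₀) wherever defined). Suppose E is locally uniformly asymptotically stable (LUAS) for Σ^∞, and suppose that for some δ > 0 the trajectories of (Σ^j)_j converge uniformly in the δ-neighborhood {x ∈ M : d(x,E) ≤ δ} of E on compact time intervals with respect to (d, b) to the trajectories of Σ^∞, where b ≡ 1. Then E is practically locally uniformly asymptotically stable (PLUAS) for (Σ^j)_j. -/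
open Filter Topology

/-- A partial flow of a time-varying system with the existence and uniqueness property of
solutions: `dom t t₀ x₀` means that the maximal solution starting at `x₀` at time `t₀` is
defined at time `t`, and `flow t t₀ x₀` is its value there.  It satisfies
`Φ(t₀,t₀,x₀) = x₀` and the cocycle identity wherever defined, and its domain in `t` is an
interval around `t₀`. -/
structure PartialFlow (M : Type*) where
  dom : ℝ → ℝ → M → Prop
  flow : ℝ → ℝ → M → M
  dom_refl : ∀ t₀ x₀, dom t₀ t₀ x₀
  flow_refl : ∀ t₀ x₀, flow t₀ t₀ x₀ = x₀
  dom_segment : ∀ t s t₀ x₀, dom t t₀ x₀ → s ∈ Set.uIcc t₀ t → dom s t₀ x₀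
  cocycle_dom : ∀ t s t₀ x₀, dom s t₀ x₀ → dom t s (flow s t₀ x₀) → dom t t₀ x₀
  cocycle : ∀ t s t₀ x₀, dom s t₀ x₀ → dom t s (flow s t₀ x₀) →
    flow t s (flow s t₀ x₀) = flow t t₀ x₀

/-- `d` is a pseudo-distance function on `M`. -/
def IsPseudoDist {M : Type*} (d : M → M → ℝ) : Prop :=
  (∀ x y, 0 ≤ d x y) ∧ (∀ x, d x x = 0) ∧ (∀ x y, d x y = d y x) ∧
    ∀ x y z, d x z ≤ d x y + d y z

/-- The pseudo-distance from a point to a set, `d(x,E) = inf_{y ∈ E} d(x,y)`. -/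
noncomputable def setDistFn {M : Type*} (d : M → M → ℝ) (S : Set M) (x : M) : ℝ :=
  sInf ((d x) '' S)

/-- `E` is uniformly stable for the flow `Φ`. -/
def FlowUnifStable {M : Type*} (Φ : PartialFlow M) (d : M → M → ℝ) (S : Set M) : Prop :=
  ∀ ε > 0, ∃ δ > 0, ∀ t₀ : ℝ, ∀ x₀ : M, setDistFn d S x₀ ≤ δ →
    (∀ t ≥ t₀, Φ.dom t t₀ x₀) ∧ ∀ t ≥ t₀, setDistFn d S (Φ.flow t t₀ x₀) ≤ ε

/-- `E` is locally uniformly attractive for the flow `Φ`. -/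
def FlowLocUnifAttractive {M : Type*} (Φ : PartialFlow M) (d : M → M → ℝ) (S : Set M) :
    Prop :=
  ∃ δ > 0, ∀ ε > 0, ∃ T > 0, ∀ t₀ : ℝ, ∀ x₀ : M, setDistFn d S x₀ ≤ δ →
    (∀ t ≥ t₀, Φ.dom t t₀ x₀) ∧ ∀ t ≥ t₀ + T, setDistFn d S (Φ.flow t t₀ x₀) ≤ ε

/-- `E` is locally uniformly asymptotically stable (LUAS) for the flow `Φ`. -/
def FlowLUAS {M : Type*} (Φ : PartialFlow M) (d : M → M → ℝ) (S : Set M) : Prop :=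
  FlowUnifStable Φ d S ∧ FlowLocUnifAttractive Φ d S

/-- `E` is practically locally uniformly asymptotically stable (PLUAS) for `(Σ^j)_j`. -/
def FlowPLUAS {M : Type*} (Φ : ℕ → PartialFlow M) (d : M → M → ℝ) (S : Set M) : Prop :=
  (∀ ε > 0, ∃ δ > 0, ∃ j₀ : ℕ, ∀ j ≥ j₀, ∀ t₀ : ℝ, ∀ x₀ : M, setDistFn d S x₀ ≤ δ →
    (∀ t ≥ t₀, (Φ j).dom t t₀ x₀) ∧ ∀ t ≥ t₀, setDistFn d S ((Φ j).flow t t₀ x₀) ≤ ε) ∧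
  (∃ δ > 0, ∀ ε > 0, ∃ T > 0, ∃ j₀ : ℕ, ∀ j ≥ j₀, ∀ t₀ : ℝ, ∀ x₀ : M,
    setDistFn d S x₀ ≤ δ →
    (∀ t ≥ t₀, (Φ j).dom t t₀ x₀) ∧ ∀ t ≥ t₀ + T, setDistFn d S ((Φ j).flow t t₀ x₀) ≤ ε)

/-- `E` is locally uniformly exponentially stable (LUES) for the flow `Φ`. -/
def FlowLUES {M : Type*} (Φ : PartialFlow M) (d : M → M → ℝ) (S : Set M) : Prop :=
  ∃ δ > 0, ∃ lam > 0, ∃ μ > 0, ∀ t₀ : ℝ, ∀ x₀ : M, setDistFn d S x₀ ≤ δ →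
    (∀ t ≥ t₀, Φ.dom t t₀ x₀) ∧
    ∀ t ≥ t₀, setDistFn d S (Φ.flow t t₀ x₀) ≤
      lam * setDistFn d S x₀ * Real.exp (-μ * (t - t₀))

/-- `E` is LUES for `(Σ^j)_{j ≥ j₀}`. -/
def FlowLUESseq {M : Type*} (Φ : ℕ → PartialFlow M) (d : M → M → ℝ) (S : Set M)
    (j₀ : ℕ) : Prop :=
  ∃ δ > 0, ∃ lam > 0, ∃ μ > 0, ∀ j ≥ j₀, ∀ t₀ : ℝ, ∀ x₀ : M, setDistFn d S x₀ ≤ δ →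
    (∀ t ≥ t₀, (Φ j).dom t t₀ x₀) ∧
    ∀ t ≥ t₀, setDistFn d S ((Φ j).flow t t₀ x₀) ≤
      lam * setDistFn d S x₀ * Real.exp (-μ * (t - t₀))

/-- The trajectories of `(Σ^j)_j` converge uniformly in `S` on compact time intervals with
respect to `(d, b)` to the trajectories of `Σ^∞`. -/
def FlowTrajConv {M : Type*} (Φ : ℕ → PartialFlow M) (Φinf : PartialFlow M)
    (d : M → M → ℝ) (b : M → ℝ) (S : Set M) : Prop :=
  ∀ ε > 0, ∀ T > 0, ∃ j₀ : ℕ, ∀ j ≥ j₀, ∀ t₀ : ℝ, ∀ x₀ ∈ S,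
    (∀ t ∈ Set.Icc t₀ (t₀ + T), Φinf.dom t t₀ x₀ ∧ Φinf.flow t t₀ x₀ ∈ S) →
    ∀ t ∈ Set.Icc t₀ (t₀ + T), (Φ j).dom t t₀ x₀ ∧
      d ((Φ j).flow t t₀ x₀) (Φinf.flow t t₀ x₀) ≤ ε * b x₀

lemma setDistFn_nonneg' {M : Type*} (d : M → M → ℝ) (hd : IsPseudoDist d) (S : Set M)
    (x : M) : 0 ≤ setDistFn d S x :=
  Real.sInf_nonneg (by rintro y ⟨z, _, rfl⟩; exact hd.1 x z)

lemma setDistFn_triangle' {M : Type*} (d : M → M → ℝ) (hd : IsPseudoDist d) (S : Set M)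
    (hS : S.Nonempty) (x y : M) :
    setDistFn d S x ≤ d x y + setDistFn d S y := by
  have hbdd : BddBelow ((d x) '' S) := ⟨0, by rintro _ ⟨z, _, rfl⟩; exact hd.1 x z⟩
  have h : setDistFn d S x - d x y ≤ setDistFn d S y := by
    apply le_csInf (hS.image _)
    rintro _ ⟨z, hz, rfl⟩
    have h1 : setDistFn d S x ≤ d x z := csInf_le hbdd ⟨z, hz, rfl⟩
    have h2 := hd.2.2.2 x y z
    linarith
  linarith

lemma key_stab {M : Type*} (d : M → M → ℝ) (hd : IsPseudoDist d) (S : Set M)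
    (hS : S.Nonempty) (Φ : ℕ → PartialFlow M) (Φinf : PartialFlow M)
    (hUS : FlowUnifStable Φinf d S)
    (δa : ℝ) (hδa : 0 < δa)
    (hA : ∀ ε > 0, ∃ T > 0, ∀ t₀ : ℝ, ∀ x₀ : M, setDistFn d S x₀ ≤ δa →
      (∀ t ≥ t₀, Φinf.dom t t₀ x₀) ∧ ∀ t ≥ t₀ + T, setDistFn d S (Φinf.flow t t₀ x₀) ≤ ε)
    (δc : ℝ) (hδc : 0 < δc)
    (hconv : FlowTrajConv Φ Φinf d (fun _ => 1) {x | setDistFn d S x ≤ δc})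
    (ε : ℝ) (hε : 0 < ε) (hεa : ε ≤ δa) (hεc : ε ≤ δc) :
    ∃ δ, 0 < δ ∧ δ ≤ ε/2 ∧ ∃ j₀ : ℕ, ∀ j ≥ j₀, ∀ t₀ : ℝ, ∀ x₀ : M,
      setDistFn d S x₀ ≤ δ →
      (∀ t ≥ t₀, (Φ j).dom t t₀ x₀) ∧
        ∀ t ≥ t₀, setDistFn d S ((Φ j).flow t t₀ x₀) ≤ ε := by
  obtain ⟨δ₁, hδ₁, hst⟩ := hUS (ε/2) (by linarith)
  set δ := min δ₁ (ε/2) with hδdef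
  have hδpos : 0 < δ := lt_min hδ₁ (by linarith)
  have hδε : δ ≤ ε/2 := min_le_right _ _
  obtain ⟨T, hT, hatt⟩ := hA (δ/2) (by positivity)
  obtain ⟨j₀, hj₀⟩ := hconv (δ/2) (by positivity) T hT
  refine ⟨δ, hδpos, hδε, j₀, ?_⟩
  intro j hj t₀ x₀ hx₀
  have step : ∀ s : ℝ, ∀ y : M, setDistFn d S y ≤ δ →
      (∀ t ∈ Set.Icc s (s+T), (Φ j).dom t s y ∧
        setDistFn d S ((Φ j).flow t s y) ≤ ε) ∧
      setDistFn d S ((Φ j).flow (s+T) s y) ≤ δ := by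
    intro s y hy
    obtain ⟨hdomI, hdistI⟩ := hst s y (le_trans hy (min_le_left _ _))
    have hyN : y ∈ {x | setDistFn d S x ≤ δc} := by
      have : δ ≤ δc := le_trans hδε (by linarith)
      exact le_trans hy this
    have hNinf : ∀ t ∈ Set.Icc s (s+T), Φinf.dom t s y ∧
        Φinf.flow t s y ∈ {x | setDistFn d S x ≤ δc} := by
      intro t ht
      exact ⟨hdomI t ht.1, le_trans (hdistI t ht.1) (by linarith)⟩
    have hc := hj₀ j hj s y hyN hNinf
    constructor
    · intro t ht
      obtain ⟨hdj, hdist⟩ := hc t ht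
      refine ⟨hdj, ?_⟩
      have htri := setDistFn_triangle' d hd S hS ((Φ j).flow t s y) (Φinf.flow t s y)
      have hI := hdistI t ht.1
      simp only [mul_one] at hdist
      linarith
    · obtain ⟨hdj, hdist⟩ := hc (s+T) ⟨by linarith, le_refl _⟩
      have hyδa : setDistFn d S y ≤ δa := le_trans hy (le_trans hδε (by linarith))
      obtain ⟨hAdom, hAdist⟩ := hatt s y hyδa
      have htri := setDistFn_triangle' d hd S hS ((Φ j).flow (s+T) s y)
        (Φinf.flow (s+T) s y)
      have h2 := hAdist (s+T) (le_refl _)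
      simp only [mul_one] at hdist
      linarith
  have hQ : ∀ n : ℕ, (Φ j).dom (t₀ + n*T) t₀ x₀ ∧
      setDistFn d S ((Φ j).flow (t₀ + n*T) t₀ x₀) ≤ δ := by
    intro n
    induction n with
    | zero =>
      simpa [(Φ j).dom_refl, (Φ j).flow_refl] using hx₀
    | succ n ih =>
      obtain ⟨hdn, hxn⟩ := ih
      obtain ⟨hblock, hnext⟩ := step (t₀ + n*T) ((Φ j).flow (t₀+n*T) t₀ x₀) hxn
      have hdomT := (hblock (t₀+n*T+T) ⟨by linarith, le_refl _⟩).1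
      have harg : t₀ + ((n:ℝ)+1)*T = t₀ + n*T + T := by ring
      have hcast : ((n+1 : ℕ) : ℝ) = (n:ℝ)+1 := by push_cast; ring
      constructor
      · rw [hcast, harg]
        exact (Φ j).cocycle_dom (t₀+n*T+T) (t₀+n*T) t₀ x₀ hdn hdomT
      · rw [hcast, harg, ← (Φ j).cocycle (t₀+n*T+T) (t₀+n*T) t₀ x₀ hdn hdomT]
        exact hnext
  have main : ∀ t ≥ t₀, (Φ j).dom t t₀ x₀ ∧
      setDistFn d S ((Φ j).flow t t₀ x₀) ≤ ε := by
    intro t ht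
    set n := ⌊(t - t₀)/T⌋₊ with hn
    have hnn : (0:ℝ) ≤ (t - t₀)/T := div_nonneg (by linarith) hT.le
    have h1 : t₀ + (n:ℝ)*T ≤ t := by
      have h := Nat.floor_le hnn
      have := (le_div_iff₀ hT).mp h
      linarith
    have h2 : t ≤ t₀ + (n:ℝ)*T + T := by
      have h := Nat.lt_floor_add_one ((t - t₀)/T)
      have := (div_lt_iff₀ hT).mp h
      nlinarith
    obtain ⟨hdn, hxn⟩ := hQ n
    obtain ⟨hblock, _⟩ := step (t₀ + n*T) _ hxn
    obtain ⟨hdt, hdist⟩ := hblock t ⟨h1, h2⟩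
    refine ⟨(Φ j).cocycle_dom t (t₀+n*T) t₀ x₀ hdn hdt, ?_⟩
    rw [← (Φ j).cocycle t (t₀+n*T) t₀ x₀ hdn hdt]
    exact hdist
  exact ⟨fun t ht => (main t ht).1, fun t ht => (main t ht).2⟩

/-- Let `d` be a pseudo-distance on `M` and `E ⊆ M` nonempty.  If `E` is
LUAS for `Σ^∞` and the trajectories of `(Σ^j)_j` converge uniformly in some
`δ`-neighborhood of `E` on compact time intervals with respect to `(d, b ≡ 1)` to the
trajectories of `Σ^∞`, then `E` is PLUAS for `(Σ^j)_j`. -/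
theorem stmt1 {M : Type*} (d : M → M → ℝ) (hd : IsPseudoDist d)
    (S : Set M) (hS : S.Nonempty)
    (Φ : ℕ → PartialFlow M) (Φinf : PartialFlow M)
    (hLUAS : FlowLUAS Φinf d S)
    (hconv : ∃ δ > 0, FlowTrajConv Φ Φinf d (fun _ => 1) {x | setDistFn d S x ≤ δ}) :
    FlowPLUAS Φ d S := by
  obtain ⟨hUS, δa, hδa, hA⟩ := hLUAS
  obtain ⟨δc, hδc, hconv⟩ := hconv
  have keyfn := key_stab d hd S hS Φ Φinf hUS δa hδa hA δc hδc hconv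
  constructor
  · intro ε hε
    have hε' : 0 < min ε (min δa δc) := lt_min hε (lt_min hδa hδc)
    obtain ⟨δ, hδ, _, j₀, hmain⟩ := keyfn (min ε (min δa δc)) hε'
      (le_trans (min_le_right _ _) (min_le_left _ _))
      (le_trans (min_le_right _ _) (min_le_right _ _))
    refine ⟨δ, hδ, j₀, fun j hj t₀ x₀ hx₀ => ?_⟩
    obtain ⟨h1, h2⟩ := hmain j hj t₀ x₀ hx₀
    exact ⟨h1, fun t ht => le_trans (h2 t ht) (min_le_left _ _)⟩
  · obtain ⟨δI, hδI, hstabI⟩ := hUS δc hδc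
    refine ⟨min δI (min δa δc), lt_min hδI (lt_min hδa hδc), ?_⟩
    intro ε hε
    have hε'pos : 0 < min ε (min δa δc) := lt_min hε (lt_min hδa hδc)
    obtain ⟨δ', hδ', hδ'le, j₀'', hmain⟩ := keyfn (min ε (min δa δc)) hε'pos
      (le_trans (min_le_right _ _) (min_le_left _ _))
      (le_trans (min_le_right _ _) (min_le_right _ _))
    obtain ⟨T', hT', hatt'⟩ := hA (δ'/2) (by positivity)
    obtain ⟨j₀''', hconv'⟩ := hconv (δ'/2) (by positivity) T' hT'
    refine ⟨T', hT', max j₀'' j₀''', ?_⟩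
    intro j hj t₀ x₀ hx₀
    obtain ⟨hdomI, hdistI⟩ := hstabI t₀ x₀ (le_trans hx₀ (min_le_left _ _))
    have hx₀N : x₀ ∈ {x | setDistFn d S x ≤ δc} :=
      le_trans hx₀ (le_trans (min_le_right _ _) (min_le_right _ _))
    have hN : ∀ t ∈ Set.Icc t₀ (t₀+T'), Φinf.dom t t₀ x₀ ∧
        Φinf.flow t t₀ x₀ ∈ {x | setDistFn d S x ≤ δc} :=
      fun t ht => ⟨hdomI t ht.1, hdistI t ht.1⟩
    have hc := hconv' j (le_trans (le_max_right _ _) hj) t₀ x₀ hx₀N hN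
    obtain ⟨hdomt₁, hdistt₁⟩ := hc (t₀+T') ⟨by linarith, le_refl _⟩
    obtain ⟨_, hAd⟩ := hatt' t₀ x₀
      (le_trans hx₀ (le_trans (min_le_right _ _) (min_le_left _ _)))
    have hy : setDistFn d S ((Φ j).flow (t₀+T') t₀ x₀) ≤ δ' := by
      have htri := setDistFn_triangle' d hd S hS ((Φ j).flow (t₀+T') t₀ x₀)
        (Φinf.flow (t₀+T') t₀ x₀)
      have h2 := hAd (t₀+T') (le_refl _)
      simp only [mul_one] at hdistt₁
      linarith
    obtain ⟨hdomy, hdisty⟩ := hmain j (le_trans (le_max_left _ _) hj) (t₀+T')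
      ((Φ j).flow (t₀+T') t₀ x₀) hy
    constructor
    · intro t ht
      rcases le_or_gt t (t₀+T') with h | h
      · exact (hc t ⟨ht, h⟩).1
      · exact (Φ j).cocycle_dom t (t₀+T') t₀ x₀ hdomt₁ (hdomy t h.le)
    · intro t ht
      rw [← (Φ j).cocycle t (t₀+T') t₀ x₀ hdomt₁ (hdomy t ht)]
      exact le_trans (hdisty t ht) (min_le_left _ _)
end

section
/- Let M be a set equipped with a pseudo-distance function d, let E ⊆ M be nonempty, and let (Σ^j)_j and Σ^∞ be time-varying systems on M, each having the existence and uniqueness property of solutions, with flows Φ^j and Φ^∞ (which in particular satisfy Φ(t₀,t₀,x₀) = x₀ and the cocycle identity Φ(t,s,Φ(s,t₀,x₀)) = Φ(t,t₀,x₀) wherever defined). Suppose E is locally uniformly exponentially stable (LUES) for Σ^∞, and suppose that for some δ > 0 the trajectories of (Σ^j)_j converge uniformly in the δ-neighborhood {x ∈ M : d(x,E) ≤ δ} of E on compact time intervals with respect to (d, b) to the trajectories of Σ^∞, where b(x) := d(x,E). Then there exists a sequence index j₀ such that E is LUES for (Σ^j)_{j≥j₀}. -/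
open Filter Topology

lemma setDist_nonneg' {M : Type*} {d : M → M → ℝ} (h0 : ∀ x y, 0 ≤ d x y)
    (S : Set M) (x : M) : 0 ≤ setDistFn d S x :=
  Real.sInf_nonneg (by rintro _ ⟨y, -, rfl⟩; exact h0 x y)

lemma setDist_triangle' {M : Type*} {d : M → M → ℝ} (hd : IsPseudoDist d) {S : Set M}
    (hS : S.Nonempty) (y z : M) :
    setDistFn d S y ≤ d y z + setDistFn d S z := by
  obtain ⟨h0, -, -, htri⟩ := hd
  have hbdd : BddBelow ((d y) '' S) := ⟨0, by rintro _ ⟨e, -, rfl⟩; exact h0 y e⟩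
  have key : setDistFn d S y - d y z ≤ setDistFn d S z := by
    apply le_csInf (hS.image _)
    rintro _ ⟨e, he, rfl⟩
    have h1 : setDistFn d S y ≤ d y e := csInf_le hbdd ⟨e, he, rfl⟩
    have h2 : d y e ≤ d y z + d z e := htri y z e
    linarith
  linarith

set_option maxHeartbeats 1000000 in
/-- Let `d` be a pseudo-distance on `M` and `E ⊆ M` nonempty.  If `E` is
LUES for `Σ^∞`, and the trajectories of `(Σ^j)_j` converge uniformly in some
`δ`-neighborhood of `E` on compact time intervals with respect to `(d, b)`, with
`b(x) = d(x,E)`, to the trajectories of `Σ^∞`, then there exists a sequence index `j₀`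
such that `E` is LUES for `(Σ^j)_{j ≥ j₀}`. -/
theorem stmt2 {M : Type*} (d : M → M → ℝ) (hd : IsPseudoDist d)
    (S : Set M) (hS : S.Nonempty)
    (Φ : ℕ → PartialFlow M) (Φinf : PartialFlow M)
    (hLUES : FlowLUES Φinf d S)
    (hconv : ∃ δ > 0, FlowTrajConv Φ Φinf d (fun x => setDistFn d S x)
      {x | setDistFn d S x ≤ δ}) :
    ∃ j₀ : ℕ, FlowLUESseq Φ d S j₀ := by
  obtain ⟨δi, hδi, lam, hlam, μ, hμ, hL⟩ := hLUES
  obtain ⟨δc, hδc, hconv⟩ := hconv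
  have hnn : ∀ x, 0 ≤ setDistFn d S x := setDist_nonneg' hd.1 S
  have htri : ∀ y z, setDistFn d S y ≤ d y z + setDistFn d S z :=
    setDist_triangle' hd hS
  -- choose the time horizon T
  set T : ℝ := max 1 (Real.log (4 * lam) / μ) with hTdef
  have hT0 : (0:ℝ) < T := lt_of_lt_of_le one_pos (le_max_left _ _)
  have hTexp : lam * Real.exp (-μ * T) ≤ 1/4 := by
    have h2 : Real.log (4 * lam) / μ ≤ T := le_max_right 1 _
    have h1 : Real.log (4 * lam) ≤ μ * T := by
      calc Real.log (4 * lam) = μ * (Real.log (4 * lam) / μ) := by field_simp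
        _ ≤ μ * T := by nlinarith
    have h3 : Real.exp (-μ * T) ≤ (4 * lam)⁻¹ := by
      rw [show (4 * lam)⁻¹ = Real.exp (-Real.log (4 * lam)) by
        rw [Real.exp_neg, Real.exp_log (by positivity)]]
      exact Real.exp_le_exp.mpr (by linarith)
    calc lam * Real.exp (-μ * T) ≤ lam * (4 * lam)⁻¹ := by
          nlinarith [Real.exp_pos (-μ * T)]
      _ = 1/4 := by field_simp
  -- choose δ
  set δ : ℝ := min δi (δc / (1 + lam)) with hδdef
  have hδ0 : (0:ℝ) < δ := lt_min hδi (by positivity)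
  have hδi' : δ ≤ δi := min_le_left _ _
  have hsum : δ * (1 + lam) ≤ δc := by
    have h := min_le_right δi (δc / (1 + lam))
    exact (le_div_iff₀ (by positivity)).mp h
  have hδc' : δ ≤ δc := by nlinarith
  have hlamδ : lam * δ ≤ δc := by nlinarith
  -- convergence index
  obtain ⟨j₀, hj₀⟩ := hconv (1/4) (by norm_num) T hT0
  refine ⟨j₀, δ, hδ0, 2 * (lam + 1/4), by positivity, Real.log 2 / T,
    div_pos (Real.log_pos (by norm_num)) hT0, ?_⟩
  -- one-step estimate
  have step : ∀ j ≥ j₀, ∀ (t₁ : ℝ) (x : M), setDistFn d S x ≤ δ →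
      ∀ t ∈ Set.Icc t₁ (t₁ + T), (Φ j).dom t t₁ x ∧
        setDistFn d S ((Φ j).flow t t₁ x) ≤
          (lam * Real.exp (-μ * (t - t₁)) + 1/4) * setDistFn d S x := by
    intro j hj t₁ x hx t ht
    obtain ⟨hdomI, hbdI⟩ := hL t₁ x (hx.trans hδi')
    have hmem : ∀ s ∈ Set.Icc t₁ (t₁ + T), Φinf.dom s t₁ x ∧
        Φinf.flow s t₁ x ∈ {y | setDistFn d S y ≤ δc} := by
      intro s hs
      refine ⟨hdomI s hs.1, ?_⟩
      have hb := hbdI s hs.1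
      have hexp : Real.exp (-μ * (s - t₁)) ≤ 1 := by
        rw [Real.exp_le_one_iff]
        nlinarith [mul_nonneg hμ.le (sub_nonneg.mpr hs.1)]
      have hxnn := hnn x
      simp only [Set.mem_setOf_eq]
      have hA : lam * setDistFn d S x * Real.exp (-μ * (s - t₁)) ≤
          lam * setDistFn d S x :=
        mul_le_of_le_one_right (mul_nonneg hlam.le hxnn) hexp
      have hB : lam * setDistFn d S x ≤ lam * δ :=
        mul_le_mul_of_nonneg_left hx hlam.le
      linarith
    have hconc := hj₀ j hj t₁ x (by simpa using hx.trans hδc') hmem t ht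
    obtain ⟨hdomj, hdist⟩ := hconc
    refine ⟨hdomj, ?_⟩
    have h1 := htri ((Φ j).flow t t₁ x) (Φinf.flow t t₁ x)
    have h2 := hbdI t ht.1
    calc setDistFn d S ((Φ j).flow t t₁ x)
        ≤ d ((Φ j).flow t t₁ x) (Φinf.flow t t₁ x)
            + setDistFn d S (Φinf.flow t t₁ x) := h1
      _ ≤ 1/4 * setDistFn d S x
            + lam * setDistFn d S x * Real.exp (-μ * (t - t₁)) := add_le_add hdist h2
      _ = (lam * Real.exp (-μ * (t - t₁)) + 1/4) * setDistFn d S x := by ring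
  intro j hj t₀ x₀ hx₀
  -- iterate the contraction
  have iter : ∀ k : ℕ, (Φ j).dom (t₀ + k * T) t₀ x₀ ∧
      setDistFn d S ((Φ j).flow (t₀ + k * T) t₀ x₀)
        ≤ (1/2)^k * setDistFn d S x₀ := by
    intro k
    induction k with
    | zero =>
        have h : t₀ + ((0:ℕ) : ℝ) * T = t₀ := by norm_num
        rw [h]
        exact ⟨(Φ j).dom_refl t₀ x₀, by rw [(Φ j).flow_refl]; simp⟩
    | succ k ih =>
        obtain ⟨hdomk, hbdk⟩ := ih
        set s := t₀ + (k : ℝ) * T with hs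
        set xk := (Φ j).flow s t₀ x₀ with hxk
        have hpowle : ((1:ℝ)/2)^k ≤ 1 := pow_le_one₀ (by norm_num) (by norm_num)
        have hxkδ : setDistFn d S xk ≤ δ := by
          calc setDistFn d S xk ≤ (1/2)^k * setDistFn d S x₀ := hbdk
            _ ≤ 1 * setDistFn d S x₀ := mul_le_mul_of_nonneg_right hpowle (hnn x₀)
            _ = setDistFn d S x₀ := one_mul _
            _ ≤ δ := hx₀
        obtain ⟨hdoms, hbds⟩ := step j hj s xk hxkδ (s + T)
          ⟨by linarith, le_refl _⟩
        have heq : t₀ + ((k+1 : ℕ) : ℝ) * T = s + T := by push_cast [hs]; ring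
        rw [heq]
        refine ⟨(Φ j).cocycle_dom _ s t₀ x₀ hdomk hdoms, ?_⟩
        rw [← (Φ j).cocycle (s + T) s t₀ x₀ hdomk hdoms]
        have hTs : s + T - s = T := by ring
        rw [hTs] at hbds
        have hnxk := hnn xk
        calc setDistFn d S ((Φ j).flow (s + T) s xk)
            ≤ (lam * Real.exp (-μ * T) + 1/4) * setDistFn d S xk := hbds
          _ ≤ (1/2) * setDistFn d S xk :=
              mul_le_mul_of_nonneg_right (by linarith) hnxk
          _ ≤ (1/2) * ((1/2)^k * setDistFn d S x₀) := by linarith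
          _ = (1/2)^(k+1) * setDistFn d S x₀ := by ring
  have key : ∀ t ≥ t₀, (Φ j).dom t t₀ x₀ ∧
      setDistFn d S ((Φ j).flow t t₀ x₀) ≤
        2 * (lam + 1/4) * setDistFn d S x₀
          * Real.exp (-(Real.log 2 / T) * (t - t₀)) := by
    intro t ht
    set k : ℕ := ⌊(t - t₀) / T⌋₊ with hk
    have hk1 : (k : ℝ) ≤ (t - t₀) / T := Nat.floor_le (div_nonneg (by linarith) hT0.le)
    have hk2 : (t - t₀) / T < (k : ℝ) + 1 := Nat.lt_floor_add_one _
    have hle1 : t₀ + (k : ℝ) * T ≤ t := by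
      have h := (le_div_iff₀ hT0).mp hk1
      linarith
    have hle2 : t ≤ t₀ + (k : ℝ) * T + T := by
      have h := (div_lt_iff₀ hT0).mp hk2
      nlinarith
    obtain ⟨hdomk, hbdk⟩ := iter k
    set s := t₀ + (k : ℝ) * T with hs
    set xk := (Φ j).flow s t₀ x₀ with hxk
    have hpowle : ((1:ℝ)/2)^k ≤ 1 := pow_le_one₀ (by norm_num) (by norm_num)
    have hxkδ : setDistFn d S xk ≤ δ := by
      calc setDistFn d S xk ≤ (1/2)^k * setDistFn d S x₀ := hbdk
        _ ≤ 1 * setDistFn d S x₀ := mul_le_mul_of_nonneg_right hpowle (hnn x₀)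
        _ = setDistFn d S x₀ := one_mul _
        _ ≤ δ := hx₀
    obtain ⟨hdomt, hbdt⟩ := step j hj s xk hxkδ t ⟨hle1, by linarith⟩
    refine ⟨(Φ j).cocycle_dom t s t₀ x₀ hdomk hdomt, ?_⟩
    rw [← (Φ j).cocycle t s t₀ x₀ hdomk hdomt]
    have hexp1 : Real.exp (-μ * (t - s)) ≤ 1 := by
      rw [Real.exp_le_one_iff]
      nlinarith [mul_nonneg hμ.le (sub_nonneg.mpr hle1)]
    have hlog : (0:ℝ) < Real.log 2 := Real.log_pos (by norm_num)
    have hpow : ((1:ℝ)/2)^k ≤ 2 * Real.exp (-(Real.log 2 / T) * (t - t₀)) := by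
      have h1 : -((k:ℝ)+1) * Real.log 2 ≤ -(Real.log 2 / T) * (t - t₀) := by
        have hm := mul_le_mul_of_nonneg_right hk2.le hlog.le
        have h0 : -(Real.log 2 / T) * (t - t₀) = -((t - t₀) / T * Real.log 2) := by
          ring
        rw [h0]
        linarith
      have h2 : Real.exp (-((k:ℝ)+1) * Real.log 2) = (1/2)^(k+1) := by
        rw [show -((k:ℝ)+1) * Real.log 2 = ((k+1:ℕ):ℝ) * (-Real.log 2) by
          push_cast; ring, Real.exp_nat_mul, Real.exp_neg, Real.exp_log two_pos]
        norm_num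
      have h3 := Real.exp_le_exp.mpr h1
      rw [h2] at h3
      calc ((1:ℝ)/2)^k = 2 * (1/2)^(k+1) := by ring
        _ ≤ 2 * Real.exp (-(Real.log 2 / T) * (t - t₀)) := by linarith
    have hnxk := hnn xk
    have hnx0 := hnn x₀
    calc setDistFn d S ((Φ j).flow t s xk)
        ≤ (lam * Real.exp (-μ * (t - s)) + 1/4) * setDistFn d S xk := hbdt
      _ ≤ (lam + 1/4) * setDistFn d S xk := by
          have := mul_le_mul_of_nonneg_left hexp1 hlam.le
          exact mul_le_mul_of_nonneg_right (by linarith) hnxk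
      _ ≤ (lam + 1/4) * ((1/2)^k * setDistFn d S x₀) :=
          mul_le_mul_of_nonneg_left hbdk (by linarith)
      _ ≤ (lam + 1/4) * (2 * Real.exp (-(Real.log 2 / T) * (t - t₀))
            * setDistFn d S x₀) :=
          mul_le_mul_of_nonneg_left
            (mul_le_mul_of_nonneg_right hpow (hnn x₀)) (by linarith)
      _ = 2 * (lam + 1/4) * setDistFn d S x₀
            * Real.exp (-(Real.log 2 / T) * (t - t₀)) := by ring
  exact ⟨fun t ht => (key t ht).1, fun t ht => (key t ht).2⟩
end

section
/- Let p ≥ 1 and let ω₁,…,ω_p be pairwise distinct positive real numbers. Suppose for each k = 1,…,p the function λ_k : ℝ → ℝ is bounded, of class C¹, and has bounded derivative. For each positive integer j define u^j_{2k−1}(t) := √(2ω_k j)·λ_k(t)·cos(ω_k j t) and u^j_{2k}(t) := √(2ω_k j)·sin(ω_k j t) for k = 1,…,p. Then the sequence of ordinary inputs u^j = (u^j_1,…,u^j_{2p}) GD(2)-converges uniformly to the polynomial input v of order ≤ 2 (in m = 2p indices) whose coefficients are v_{(2k−1,2k)} = λ_k, v_{(2k,2k−1)} = −λ_k, and v_I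 = 0 for all other multi-indices I with 0 < |I| ≤ 2. -/
/-!
Each `u^j_i` is an oscillation `√(2 ν_i j) a_i(t) cos(ν_i j t - φ_i)` with slowly varying
amplitude. Integrating by parts, it is the derivative of
`-√(2 ν_i j) a_i(t) sin(ν_i j t - φ_i) / (ν_i j) = O(j^{-1/2})` up to an error of the same size,
which is put into `v^j_i`; so the first-order differences vanish uniformly. By product-to-sum, the second-order integrand `u_i W_{i'}` is a bounded combination
of oscillations with frequencies `(ν_i ± ν_{i'}) j`, whose primitives are `O(1/j)`, except for
the difference frequency when `ν_i = ν_{i'}`: this resonant term does not oscillate and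
survives as `v_{(i,i')} = a_i a_{i'} sin(φ_{i'} - φ_i)`. For the theorem, the pair
`(2k-1, 2k)` has frequency `ω_k`, amplitudes `λ_k, 1` and phases `0, π/2`; distinct `ω_k`
leave no other resonances.
-/

open Filter MeasureTheory Topology Set

section Inputs

def OrdinaryInput (m : ℕ) (u : Fin m → ℝ → ℝ) : Prop :=
  ∀ i : Fin m, Measurable (u i) ∧ ∃ c : ℝ, ∀ t : ℝ, |u i t| ≤ c

def PolyInput (m r : ℕ) (v : List (Fin m) → ℝ → ℝ) : Prop :=
  ∀ I : List (Fin m), 0 < I.length → I.length ≤ r →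
    Measurable (v I) ∧ ∃ c : ℝ, ∀ t : ℝ, |v I t| ≤ c

/-- `W` is an `r`-th order generalized difference of `u` and `v` (the locally
absolutely continuous solutions of `Ẇ_i = v_i − u_i`, `Ẇ_{iI} = v_{iI} − u_i W_I`,
encoded by the integral equations). -/
def IsGenDiff (m r : ℕ) (u : Fin m → ℝ → ℝ) (v W : List (Fin m) → ℝ → ℝ) : Prop :=
  (∀ i : Fin m,
    (∀ a b : ℝ, IntervalIntegrable (fun s => v [i] s - u i s) MeasureTheory.volume a b) ∧
    ∀ t : ℝ, W [i] t = W [i] 0 + ∫ s in (0:ℝ)..t, (v [i] s - u i s)) ∧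
  (∀ i : Fin m, ∀ I : List (Fin m), 0 < I.length → I.length < r →
    (∀ a b : ℝ, IntervalIntegrable (fun s => v (i :: I) s - u i s * W I s)
      MeasureTheory.volume a b) ∧
    ∀ t : ℝ, W (i :: I) t = W (i :: I) 0 + ∫ s in (0:ℝ)..t, (v (i :: I) s - u i s * W I s))

/-- The sequence of ordinary inputs `u^j` GD(`r`)-converges uniformly to `v`. -/
def GDConvUnif (m r : ℕ) (u : ℕ → Fin m → ℝ → ℝ) (v : List (Fin m) → ℝ → ℝ) : Prop :=
  ∃ (vs : ℕ → List (Fin m) → ℝ → ℝ) (W : ℕ → List (Fin m) → ℝ → ℝ),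
    (∀ j, PolyInput m r (vs j)) ∧
    (∀ j, IsGenDiff m r (u j) (vs j) (W j)) ∧
    ∀ I : List (Fin m), 0 < I.length → I.length ≤ r →
      TendstoUniformly (fun j t => vs j I t) (v I) atTop ∧
      TendstoUniformly (fun j t => W j I t) (fun _ => 0) atTop ∧
      (I.length = r → ∀ i : Fin m,
        TendstoUniformly (fun j t => u j i t * W j I t) (fun _ => 0) atTop)

end Inputs

/-- The index `2k-1` (1-based), i.e. `2k` (0-based), among `{1,…,2p}`. -/
def idxA (p : ℕ) (k : Fin p) : Fin (2 * p) :=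
  ⟨2 * k.1, by have := k.isLt; omega⟩

/-- The index `2k` (1-based), i.e. `2k+1` (0-based), among `{1,…,2p}`. -/
def idxB (p : ℕ) (k : Fin p) : Fin (2 * p) :=
  ⟨2 * k.1 + 1, by have := k.isLt; omega⟩

open Real

theorem abs_mul_le_of_abs_le {a b A B : ℝ} (ha : |a| ≤ A) (hb : |b| ≤ B) : |a * b| ≤ A * B := by
  rw [abs_mul]; exact mul_le_mul ha hb (abs_nonneg _) ((abs_nonneg _).trans ha)

theorem tendstoUniformly_of_abs_sub_le {α : Type*} {F : ℕ → α → ℝ} {f : α → ℝ} {r : ℕ → ℝ}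
    (hr : Tendsto r atTop (𝓝 0)) (h : ∀ᶠ j in atTop, ∀ x, |F j x - f x| ≤ r j) :
    TendstoUniformly F f atTop := by
  rw [Metric.tendstoUniformly_iff]
  intro ε hε
  filter_upwards [h, hr.eventually (gt_mem_nhds hε)] with j hj hrj x
  rw [dist_comm, Real.dist_eq]
  exact (hj x).trans_lt hrj

theorem tendstoUniformly_sqrt_mul {α : Type*} {F : ℕ → α → ℝ} {C : ℝ} (c : ℝ)
    (h : ∀ᶠ j : ℕ in atTop, ∀ x, |F j x| ≤ C / j) :
    TendstoUniformly (fun (j : ℕ) x => √(c * j) * F j x) (fun _ => 0) atTop := by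
  have hrate : Tendsto (fun j : ℕ => √c * C / √(j : ℝ)) atTop (𝓝 0) :=
    tendsto_const_nhds.div_atTop (tendsto_sqrt_atTop.comp tendsto_natCast_atTop_atTop)
  refine tendstoUniformly_of_abs_sub_le hrate (h.mono fun j hj x => ?_)
  calc |√(c * j) * F j x - 0| = √c * √j * |F j x| := by
        rw [sub_zero, abs_mul, abs_of_nonneg (sqrt_nonneg _), sqrt_mul' c (Nat.cast_nonneg j)]
    _ ≤ √c * √j * (C / j) := by gcongr; exact hj x
    _ = √c * C * (√j / j) := by ring
    _ = √c * C / √j := by rw [sqrt_div_self', mul_one_div]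

theorem eq_add_integral_of_hasDerivAt {F f : ℝ → ℝ} (hF : ∀ t, HasDerivAt F (f t) t)
    (hf : Continuous f) :
    (∀ a b : ℝ, IntervalIntegrable f volume a b) ∧ ∀ t, F t = F 0 + ∫ s in (0 : ℝ)..t, f s := by
  refine ⟨hf.intervalIntegrable, fun t => ?_⟩
  rw [intervalIntegral.integral_eq_sub_of_hasDerivAt (fun x _ => hF x)
    (hf.intervalIntegrable 0 t)]
  ring

theorem isGenDiff_of_hasDerivAt {m r : ℕ} {u : Fin m → ℝ → ℝ} {v W : List (Fin m) → ℝ → ℝ}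
    (h₁ : ∀ i t, HasDerivAt (W [i]) (v [i] t - u i t) t)
    (hc₁ : ∀ i, Continuous fun t => v [i] t - u i t)
    (h₂ : ∀ i I, 0 < I.length → I.length < r →
      ∀ t, HasDerivAt (W (i :: I)) (v (i :: I) t - u i t * W I t) t)
    (hc₂ : ∀ i I, 0 < I.length → I.length < r →
      Continuous fun t => v (i :: I) t - u i t * W I t) :
    IsGenDiff m r u v W :=
  ⟨fun i => eq_add_integral_of_hasDerivAt (h₁ i) (hc₁ i),
    fun i I h0 hr => eq_add_integral_of_hasDerivAt (h₂ i I h0 hr) (hc₂ i I h0 hr)⟩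

noncomputable section

def oscPrimitive (g : ℝ → ℝ) (β ψ t : ℝ) : ℝ := g t * sin (β * t - ψ) / β

/-- For `β = 0` the primitive is `0` (division by zero), so the whole integrand `g t * cos ψ` is
counted as defect: this resonant term is what survives in the limit. -/
def oscDefect (g g' : ℝ → ℝ) (β ψ t : ℝ) : ℝ :=
  if β = 0 then g t * cos ψ else -(g' t * sin (β * t - ψ) / β)

end

section Oscillation

variable {g g' : ℝ → ℝ} {β ψ : ℝ}

theorem hasDerivAt_oscPrimitive {t : ℝ} (hg : HasDerivAt g (g' t) t) (β ψ : ℝ) :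
    HasDerivAt (oscPrimitive g β ψ) (g t * cos (β * t - ψ) - oscDefect g g' β ψ t) t := by
  rcases eq_or_ne β 0 with rfl | hβ
  · have hzero : oscPrimitive g 0 ψ = fun _ => 0 := by funext s; simp [oscPrimitive]
    rw [hzero]
    exact (hasDerivAt_const t (0 : ℝ)).congr_deriv (by simp [oscDefect])
  · have hsin : HasDerivAt (fun s => sin (β * s - ψ)) (cos (β * t - ψ) * β) t := by
      simpa using (((hasDerivAt_id t).const_mul β).sub_const ψ).sin
    refine ((hg.mul hsin).div_const β).congr_deriv ?_
    simp only [oscDefect, hβ, if_false]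
    field_simp
    ring

theorem abs_oscPrimitive_le {C : ℝ} (hg : ∀ t, |g t| ≤ C) (β ψ t : ℝ) :
    |oscPrimitive g β ψ t| ≤ C / |β| := by
  rw [oscPrimitive, abs_div]
  gcongr
  simpa using abs_mul_le_of_abs_le (hg t) (abs_sin_le_one (β * t - ψ))

theorem abs_oscDefect_le_of_ne_zero {C' : ℝ} (hβ : β ≠ 0) (hg' : ∀ t, |g' t| ≤ C') (t : ℝ) :
    |oscDefect g g' β ψ t| ≤ C' / |β| := by
  rw [oscDefect, if_neg hβ, abs_neg, abs_div]
  gcongr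
  simpa using abs_mul_le_of_abs_le (hg' t) (abs_sin_le_one (β * t - ψ))

theorem abs_oscDefect_le {C C' : ℝ} (hg : ∀ t, |g t| ≤ C) (hg' : ∀ t, |g' t| ≤ C') (t : ℝ) :
    |oscDefect g g' β ψ t| ≤ C + C' / |β| := by
  rcases eq_or_ne β 0 with rfl | hβ
  · simpa [oscDefect] using abs_mul_le_of_abs_le (hg t) (abs_cos_le_one ψ)
  · have hC : 0 ≤ C := (abs_nonneg _).trans (hg 0)
    linarith [abs_oscDefect_le_of_ne_zero (ψ := ψ) (g := g) hβ hg' t]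

theorem continuous_oscPrimitive (hg : Continuous g) (β ψ : ℝ) :
    Continuous (oscPrimitive g β ψ) := by
  unfold oscPrimitive; fun_prop

theorem continuous_oscDefect (hg : Continuous g) (hg' : Continuous g') (β ψ : ℝ) :
    Continuous (oscDefect g g' β ψ) := by
  unfold oscDefect; split_ifs <;> fun_prop

theorem abs_oscPrimitive_le_div {C : ℝ} (hg : ∀ t, |g t| ≤ C) (b ψ : ℝ) (j : ℕ) (t : ℝ) :
    |oscPrimitive g (b * j) ψ t| ≤ C / |b| / j := by
  simpa [abs_mul, div_div] using abs_oscPrimitive_le hg (b * j) ψ t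

theorem tendstoUniformly_oscDefect {C' : ℝ} (hg' : ∀ t, |g' t| ≤ C') (b ψ : ℝ) :
    TendstoUniformly (fun (j : ℕ) t => oscDefect g g' (b * j) ψ t)
      (fun t => if b = 0 then g t * cos ψ else 0) atTop := by
  rcases eq_or_ne b 0 with rfl | hb
  · refine tendstoUniformly_of_abs_sub_le tendsto_const_nhds (Eventually.of_forall fun j t => ?_)
    simp [oscDefect]
  · refine tendstoUniformly_of_abs_sub_le (tendsto_const_div_atTop_nhds_zero_nat (C' / |b|)) ?_
    filter_upwards [eventually_ne_atTop 0] with j hj t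
    have hbj : b * j ≠ 0 := mul_ne_zero hb (Nat.cast_ne_zero.mpr hj)
    simpa [hb, abs_mul, div_div] using abs_oscDefect_le_of_ne_zero (ψ := ψ) (g := g) hbj hg' t

end Oscillation

section OscillatingInputs

variable {m : ℕ} (ν φ : Fin m → ℝ) (a a' : Fin m → ℝ → ℝ)

noncomputable section

def oscInput (j : ℕ) (i : Fin m) (t : ℝ) : ℝ :=
  √(2 * ν i * j) * a i t * cos (ν i * j * t - φ i)

def oscW₁ (j : ℕ) (i : Fin m) (t : ℝ) : ℝ :=
  -(√(2 * ν i * j) * oscPrimitive (a i) (ν i * j) (φ i) t)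

def oscV₁ (j : ℕ) (i : Fin m) (t : ℝ) : ℝ :=
  √(2 * ν i * j) * oscDefect (a i) (a' i) (ν i * j) (φ i) t

/-- Kept in this form rather than `√(ν i * ν i') / ν i'` (`pairCoeff_of_ne_zero`) so that
`oscInput_mul_oscW₁` also holds for `j = 0`. -/
def pairCoeff (j : ℕ) (i i' : Fin m) : ℝ :=
  √(2 * ν i * j) * √(2 * ν i' * j) / (2 * (ν i' * j))

def pairAmp (i i' : Fin m) (t : ℝ) : ℝ := a i t * a i' t

def pairAmpDeriv (i i' : Fin m) (t : ℝ) : ℝ := a' i t * a i' t + a i t * a' i' t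

def oscW₂ (j : ℕ) (i i' : Fin m) (t : ℝ) : ℝ :=
  -(pairCoeff ν j i i' *
    (oscPrimitive (pairAmp a i i') ((ν i - ν i') * j) (φ i - φ i' + π / 2) t -
      oscPrimitive (pairAmp a i i') ((ν i + ν i') * j) (φ i + φ i' + π / 2) t))

def oscV₂ (j : ℕ) (i i' : Fin m) (t : ℝ) : ℝ :=
  pairCoeff ν j i i' *
    (oscDefect (pairAmp a i i') (pairAmpDeriv a a' i i') ((ν i - ν i') * j)
        (φ i - φ i' + π / 2) t -
      oscDefect (pairAmp a i i') (pairAmpDeriv a a' i i') ((ν i + ν i') * j)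
        (φ i + φ i' + π / 2) t)

def oscW (j : ℕ) : List (Fin m) → ℝ → ℝ
  | [i] => oscW₁ ν φ a j i
  | [i, i'] => oscW₂ ν φ a j i i'
  | _ => fun _ => 0

def oscV (j : ℕ) : List (Fin m) → ℝ → ℝ
  | [i] => oscV₁ ν φ a a' j i
  | [i, i'] => oscV₂ ν φ a a' j i i'
  | _ => fun _ => 0

end

variable {ν φ a a'}

theorem oscInput_mul_oscW₁ (j : ℕ) (i i' : Fin m) (t : ℝ) :
    oscInput ν φ a j i t * oscW₁ ν φ a j i' t =
      pairCoeff ν j i i' * pairAmp a i i' t *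
        (cos ((ν i - ν i') * j * t - (φ i - φ i' + π / 2)) -
          cos ((ν i + ν i') * j * t - (φ i + φ i' + π / 2))) := by
  set X := ν i * j * t - φ i
  set Y := ν i' * j * t - φ i'
  have hminus : (ν i - ν i') * j * t - (φ i - φ i' + π / 2) = X - Y - π / 2 := by ring
  have hplus : (ν i + ν i') * j * t - (φ i + φ i' + π / 2) = X + Y - π / 2 := by ring
  rw [hminus, hplus, cos_sub_pi_div_two, cos_sub_pi_div_two, sin_add, sin_sub]
  simp only [oscInput, oscW₁, oscPrimitive, pairCoeff, pairAmp]
  ring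

theorem hasDerivAt_oscW₁ (ha : ∀ i t, HasDerivAt (a i) (a' i t) t) (j : ℕ) (i : Fin m) (t : ℝ) :
    HasDerivAt (oscW₁ ν φ a j i) (oscV₁ ν φ a a' j i t - oscInput ν φ a j i t) t := by
  refine (((hasDerivAt_oscPrimitive (ha i t) (ν i * j) (φ i)).const_mul _).neg).congr_deriv ?_
  simp only [oscV₁, oscInput]
  ring

theorem hasDerivAt_pairAmp (ha : ∀ i t, HasDerivAt (a i) (a' i t) t) (i i' : Fin m) (t : ℝ) :
    HasDerivAt (pairAmp a i i') (pairAmpDeriv a a' i i' t) t :=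
  (ha i t).mul (ha i' t)

theorem hasDerivAt_oscW₂ (ha : ∀ i t, HasDerivAt (a i) (a' i t) t) (j : ℕ) (i i' : Fin m)
    (t : ℝ) :
    HasDerivAt (oscW₂ ν φ a j i i')
      (oscV₂ ν φ a a' j i i' t - oscInput ν φ a j i t * oscW₁ ν φ a j i' t) t := by
  have hg := hasDerivAt_pairAmp ha i i' t
  refine ((((hasDerivAt_oscPrimitive hg _ _).sub (hasDerivAt_oscPrimitive hg _ _)).const_mul
    (pairCoeff ν j i i')).neg).congr_deriv ?_
  rw [oscInput_mul_oscW₁]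
  simp only [oscV₂]
  ring

theorem continuous_oscInput (hac : ∀ i, Continuous (a i)) (j : ℕ) (i : Fin m) :
    Continuous (oscInput ν φ a j i) := by
  have := hac i
  unfold oscInput; fun_prop

theorem continuous_oscW₁ (hac : ∀ i, Continuous (a i)) (j : ℕ) (i : Fin m) :
    Continuous (oscW₁ ν φ a j i) :=
  ((continuous_oscPrimitive (hac i) _ _).const_mul _).neg

theorem continuous_oscV₁ (hac : ∀ i, Continuous (a i)) (ha'c : ∀ i, Continuous (a' i))
    (j : ℕ) (i : Fin m) : Continuous (oscV₁ ν φ a a' j i) :=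
  (continuous_oscDefect (hac i) (ha'c i) _ _).const_mul _

theorem continuous_oscV₂ (hac : ∀ i, Continuous (a i)) (ha'c : ∀ i, Continuous (a' i))
    (j : ℕ) (i i' : Fin m) : Continuous (oscV₂ ν φ a a' j i i') := by
  have hg : Continuous (pairAmp a i i') := (hac i).mul (hac i')
  have hg' : Continuous (pairAmpDeriv a a' i i') :=
    ((ha'c i).mul (hac i')).add ((hac i).mul (ha'c i'))
  exact ((continuous_oscDefect hg hg' _ _).sub (continuous_oscDefect hg hg' _ _)).const_mul _

theorem isGenDiff_oscW (ha : ∀ i t, HasDerivAt (a i) (a' i t) t)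
    (ha'c : ∀ i, Continuous (a' i)) (j : ℕ) :
    IsGenDiff m 2 (oscInput ν φ a j) (oscV ν φ a a' j) (oscW ν φ a j) := by
  have hac : ∀ i, Continuous (a i) := fun i =>
    Differentiable.continuous fun t => (ha i t).differentiableAt
  refine isGenDiff_of_hasDerivAt (hasDerivAt_oscW₁ ha j)
    (fun i => (continuous_oscV₁ hac ha'c j i).sub (continuous_oscInput hac j i))
    (fun i I h0 h2 => ?_) (fun i I h0 h2 => ?_)
  all_goals obtain ⟨i', rfl⟩ := List.length_eq_one_iff.mp (by omega : I.length = 1)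
  · exact hasDerivAt_oscW₂ ha j i i'
  · exact (continuous_oscV₂ hac ha'c j i i').sub
      ((continuous_oscInput hac j i).mul (continuous_oscW₁ hac j i'))

theorem pairCoeff_of_ne_zero (hν : ∀ i, 0 < ν i) {j : ℕ} (hj : j ≠ 0) (i i' : Fin m) :
    pairCoeff ν j i i' = √(ν i * ν i') / ν i' := by
  have hj' : (0 : ℝ) < j := Nat.cast_pos.mpr (Nat.pos_of_ne_zero hj)
  have hprod : √(2 * ν i * j) * √(2 * ν i' * j) = 2 * j * √(ν i * ν i') := by
    rw [← sqrt_mul (by have := hν i; positivity),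
      show 2 * ν i * j * (2 * ν i' * j) = (2 * j) ^ 2 * (ν i * ν i') by ring,
      sqrt_mul (by positivity), sqrt_sq (by positivity)]
  rw [pairCoeff, hprod]
  field_simp [(hν i').ne']

theorem abs_pairCoeff_le (hν : ∀ i, 0 < ν i) (j : ℕ) (i i' : Fin m) :
    |pairCoeff ν j i i'| ≤ √(ν i * ν i') / ν i' := by
  rcases eq_or_ne j 0 with rfl | hj
  · simp only [pairCoeff, Nat.cast_zero, mul_zero, sqrt_zero, zero_div, abs_zero]
    exact div_nonneg (sqrt_nonneg _) (hν i').le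
  · rw [pairCoeff_of_ne_zero hν hj, abs_of_nonneg (div_nonneg (sqrt_nonneg _) (hν i').le)]

section Estimates

variable {C C' : Fin m → ℝ}

theorem abs_pairAmp_le (hC : ∀ i t, |a i t| ≤ C i) (i i' : Fin m) (t : ℝ) :
    |pairAmp a i i' t| ≤ C i * C i' :=
  abs_mul_le_of_abs_le (hC i t) (hC i' t)

theorem abs_pairAmpDeriv_le (hC : ∀ i t, |a i t| ≤ C i) (hC' : ∀ i t, |a' i t| ≤ C' i)
    (i i' : Fin m) (t : ℝ) :
    |pairAmpDeriv a a' i i' t| ≤ C' i * C i' + C i * C' i' :=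
  (abs_add_le _ _).trans (add_le_add (abs_mul_le_of_abs_le (hC' i t) (hC i' t))
    (abs_mul_le_of_abs_le (hC i t) (hC' i' t)))

theorem abs_oscW₂_le (hν : ∀ i, 0 < ν i) (hC : ∀ i t, |a i t| ≤ C i) (j : ℕ) (i i' : Fin m)
    (t : ℝ) :
    |oscW₂ ν φ a j i i' t| ≤ √(ν i * ν i') / ν i' *
      (C i * C i' / |ν i - ν i'| + C i * C i' / |ν i + ν i'|) / j := by
  have hg := abs_pairAmp_le hC i i'
  rw [oscW₂, abs_neg, abs_mul, mul_div_assoc, add_div]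
  gcongr
  · exact div_nonneg (sqrt_nonneg _) (hν i').le
  · exact abs_pairCoeff_le hν j i i'
  · exact (abs_sub _ _).trans (add_le_add (abs_oscPrimitive_le_div hg _ _ j t)
      (abs_oscPrimitive_le_div hg _ _ j t))

theorem polyInput_oscV (hac : ∀ i, Continuous (a i)) (ha'c : ∀ i, Continuous (a' i))
    (hC : ∀ i t, |a i t| ≤ C i) (hC' : ∀ i t, |a' i t| ≤ C' i) (j : ℕ) :
    PolyInput m 2 (oscV ν φ a a' j) := by
  intro I h0 h2
  match I, h0, h2 with
  | [i], _, _ =>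
    refine ⟨(continuous_oscV₁ hac ha'c j i).measurable,
      √(2 * ν i * j) * (C i + C' i / |ν i * j|), fun t => ?_⟩
    rw [oscV, oscV₁, abs_mul, abs_of_nonneg (sqrt_nonneg _)]
    gcongr
    exact abs_oscDefect_le (hC i) (hC' i) t
  | [i, i'], _, _ =>
    have hg := abs_pairAmp_le hC i i'
    have hg' := abs_pairAmpDeriv_le hC hC' i i'
    refine ⟨(continuous_oscV₂ hac ha'c j i i').measurable,
      |pairCoeff ν j i i'| * (C i * C i' + (C' i * C i' + C i * C' i') / |(ν i - ν i') * j| +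
        (C i * C i' + (C' i * C i' + C i * C' i') / |(ν i + ν i') * j|)), fun t => ?_⟩
    rw [oscV, oscV₂, abs_mul]
    gcongr
    exact (abs_sub _ _).trans (add_le_add (abs_oscDefect_le hg hg' t) (abs_oscDefect_le hg hg' t))

theorem tendstoUniformly_oscW₁ (hC : ∀ i t, |a i t| ≤ C i) (i : Fin m) :
    TendstoUniformly (fun j t => oscW₁ ν φ a j i t) (fun _ => 0) atTop := by
  simp only [oscW₁, ← mul_neg]
  refine tendstoUniformly_sqrt_mul (C := C i / |ν i|) _ (Eventually.of_forall fun j t => ?_)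
  simpa using abs_oscPrimitive_le_div (hC i) (ν i) (φ i) j t

theorem tendstoUniformly_oscV₁ (hν : ∀ i, 0 < ν i) (hC' : ∀ i t, |a' i t| ≤ C' i) (i : Fin m) :
    TendstoUniformly (fun j t => oscV₁ ν φ a a' j i t) (fun _ => 0) atTop := by
  simp only [oscV₁]
  refine tendstoUniformly_sqrt_mul (C := C' i / |ν i|) _
    ((eventually_ne_atTop 0).mono fun j hj t => ?_)
  have hβ : ν i * j ≠ 0 := mul_ne_zero (hν i).ne' (Nat.cast_ne_zero.mpr hj)
  simpa [abs_mul, div_div] using abs_oscDefect_le_of_ne_zero (g := a i) (ψ := φ i) hβ (hC' i) t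

theorem tendstoUniformly_oscW₂ (hν : ∀ i, 0 < ν i) (hC : ∀ i t, |a i t| ≤ C i) (i i' : Fin m) :
    TendstoUniformly (fun j t => oscW₂ ν φ a j i i' t) (fun _ => 0) atTop :=
  tendstoUniformly_of_abs_sub_le (tendsto_const_div_atTop_nhds_zero_nat _)
    (Eventually.of_forall fun j t => by simpa using abs_oscW₂_le hν hC j i i' t)

theorem tendstoUniformly_oscInput_mul_oscW₂ (hν : ∀ i, 0 < ν i) (hC : ∀ i t, |a i t| ≤ C i)
    (i'' i i' : Fin m) :
    TendstoUniformly (fun j t => oscInput ν φ a j i'' t * oscW₂ ν φ a j i i' t)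
      (fun _ => 0) atTop := by
  simp only [oscInput, mul_assoc (√(2 * ν i'' * _))]
  refine tendstoUniformly_sqrt_mul (C := C i'' * (√(ν i * ν i') / ν i' *
    (C i * C i' / |ν i - ν i'| + C i * C i' / |ν i + ν i'|))) _
    (Eventually.of_forall fun j t => ?_)
  rw [mul_div_assoc]
  refine abs_mul_le_of_abs_le ?_ (abs_oscW₂_le hν hC j i i' t)
  simpa using abs_mul_le_of_abs_le (hC i'' t) (abs_cos_le_one (ν i'' * j * t - φ i''))

theorem tendstoUniformly_oscV₂ (hν : ∀ i, 0 < ν i) (hC : ∀ i t, |a i t| ≤ C i)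
    (hC' : ∀ i t, |a' i t| ≤ C' i) (i i' : Fin m) :
    TendstoUniformly (fun j t => oscV₂ ν φ a a' j i i' t)
      (fun t => if ν i = ν i' then a i t * a i' t * sin (φ i' - φ i) else 0) atTop := by
  have hg' := abs_pairAmpDeriv_le hC hC' i i'
  have hlim := (Real.uniformContinuous_const_mul (x := √(ν i * ν i') / ν i')).comp_tendstoUniformly
    ((tendstoUniformly_oscDefect (g := pairAmp a i i') hg' (ν i - ν i') (φ i - φ i' + π / 2)).sub
      (tendstoUniformly_oscDefect (g := pairAmp a i i') hg' (ν i + ν i') (φ i + φ i' + π / 2)))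
  have hF : ∀ᶠ j in atTop, (fun t => oscV₂ ν φ a a' j i i' t) =
      (fun t => √(ν i * ν i') / ν i' *
        (oscDefect (pairAmp a i i') (pairAmpDeriv a a' i i') ((ν i - ν i') * j)
          (φ i - φ i' + π / 2) t -
        oscDefect (pairAmp a i i') (pairAmpDeriv a a' i i') ((ν i + ν i') * j)
          (φ i + φ i' + π / 2) t)) :=
    (eventually_ne_atTop 0).mono fun j hj => by simp only [oscV₂, pairCoeff_of_ne_zero hν hj]
  rw [tendstoUniformly_congr hF]
  convert hlim using 1
  · rfl
  funext t
  have hsum : ν i + ν i' ≠ 0 := (add_pos (hν i) (hν i')).ne'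
  by_cases hres : ν i = ν i'
  · have hκ : √(ν i * ν i') / ν i' = 1 := by
      rw [hres, sqrt_mul_self (hν i').le, div_self (hν i').ne']
    simp only [Function.comp_apply, Pi.sub_apply, if_pos hres, if_pos (sub_eq_zero.mpr hres),
      if_neg hsum, hκ, pairAmp, cos_add_pi_div_two, ← neg_sub (φ i), sin_neg]
    ring
  · simp [hres, hsum, sub_eq_zero]

end Estimates

theorem gdConvUnif_oscInput (hν : ∀ i, 0 < ν i) (ha : ∀ i t, HasDerivAt (a i) (a' i t) t)
    (ha'c : ∀ i, Continuous (a' i)) (hab : ∀ i, ∃ C, ∀ t, |a i t| ≤ C)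
    (ha'b : ∀ i, ∃ C, ∀ t, |a' i t| ≤ C) {v : List (Fin m) → ℝ → ℝ}
    (hv₁ : ∀ i, v [i] = fun _ => 0)
    (hv₂ : ∀ i i', v [i, i'] = fun t =>
      if ν i = ν i' then a i t * a i' t * sin (φ i' - φ i) else 0) :
    GDConvUnif m 2 (oscInput ν φ a) v := by
  choose C hC using hab
  choose C' hC' using ha'b
  have hac : ∀ i, Continuous (a i) := fun i =>
    Differentiable.continuous fun t => (ha i t).differentiableAt
  refine ⟨oscV ν φ a a', oscW ν φ a, polyInput_oscV hac ha'c hC hC', isGenDiff_oscW ha ha'c, ?_⟩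
  intro I h0 h2
  match I, h0, h2 with
  | [i], _, _ =>
    rw [hv₁]
    exact ⟨tendstoUniformly_oscV₁ hν hC' i, tendstoUniformly_oscW₁ hC i, by simp⟩
  | [i, i'], _, _ =>
    rw [hv₂]
    exact ⟨tendstoUniformly_oscV₂ hν hC hC' i i', tendstoUniformly_oscW₂ hν hC i i',
      fun _ i'' => tendstoUniformly_oscInput_mul_oscW₂ hν hC i'' i i'⟩

end OscillatingInputs

section Pairs

variable {p : ℕ}

def pairOf (i : Fin (2 * p)) : Fin p := ⟨i / 2, by omega⟩

noncomputable def pairPhase (i : Fin (2 * p)) : ℝ := if (i : ℕ) % 2 = 0 then 0 else π / 2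

def interleave (f : Fin p → ℝ → ℝ) (c : ℝ) (i : Fin (2 * p)) (t : ℝ) : ℝ :=
  if (i : ℕ) % 2 = 0 then f (pairOf i) t else c

theorem exists_eq_idxA_or_idxB (i : Fin (2 * p)) : ∃ k, i = idxA p k ∨ i = idxB p k :=
  ⟨pairOf i, by rcases Nat.mod_two_eq_zero_or_one i with h | h <;>
    [left; right] <;> ext <;> simp [idxA, idxB, pairOf] <;> omega⟩

@[simp] theorem idxA_inj {k l : Fin p} : idxA p k = idxA p l ↔ k = l := by
  simp [idxA, Fin.ext_iff]

@[simp] theorem idxB_inj {k l : Fin p} : idxB p k = idxB p l ↔ k = l := by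
  simp [idxB, Fin.ext_iff]

@[simp] theorem idxA_ne_idxB (k l : Fin p) : idxA p k ≠ idxB p l := by
  simp [idxA, idxB, Fin.ext_iff]; omega

@[simp] theorem idxB_ne_idxA (k l : Fin p) : idxB p k ≠ idxA p l := (idxA_ne_idxB l k).symm

@[simp] theorem pairOf_idxA (k : Fin p) : pairOf (idxA p k) = k := by
  ext; simp [pairOf, idxA]

@[simp] theorem pairOf_idxB (k : Fin p) : pairOf (idxB p k) = k := by
  ext; simp [pairOf, idxB]; omega

@[simp] theorem pairPhase_idxA (k : Fin p) : pairPhase (idxA p k) = 0 := by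
  simp [pairPhase, idxA]

@[simp] theorem pairPhase_idxB (k : Fin p) : pairPhase (idxB p k) = π / 2 := by
  simp [pairPhase, idxB]

@[simp] theorem interleave_idxA (f : Fin p → ℝ → ℝ) (c : ℝ) (k : Fin p) (t : ℝ) :
    interleave f c (idxA p k) t = f k t := by
  rw [interleave, if_pos (by simp [idxA]), pairOf_idxA]

@[simp] theorem interleave_idxB (f : Fin p → ℝ → ℝ) (c : ℝ) (k : Fin p) (t : ℝ) :
    interleave f c (idxB p k) t = c := by
  simp [interleave, idxB]

theorem interleave_idxA_fun (f : Fin p → ℝ → ℝ) (c : ℝ) (k : Fin p) :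
    interleave f c (idxA p k) = f k :=
  funext (interleave_idxA f c k)

theorem interleave_idxB_fun (f : Fin p → ℝ → ℝ) (c : ℝ) (k : Fin p) :
    interleave f c (idxB p k) = fun _ => c :=
  funext (interleave_idxB f c k)

theorem exists_abs_interleave_le {f : Fin p → ℝ → ℝ} (hf : ∀ k, ∃ C, ∀ t, |f k t| ≤ C) (c : ℝ)
    (i : Fin (2 * p)) : ∃ C, ∀ t, |interleave f c i t| ≤ C := by
  obtain ⟨k, rfl | rfl⟩ := exists_eq_idxA_or_idxB i
  · simpa using hf k
  · exact ⟨|c|, by simp⟩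

theorem continuous_interleave {f : Fin p → ℝ → ℝ} (hf : ∀ k, Continuous (f k)) (c : ℝ)
    (i : Fin (2 * p)) : Continuous (interleave f c i) := by
  obtain ⟨k, rfl | rfl⟩ := exists_eq_idxA_or_idxB i
  · rw [interleave_idxA_fun]; exact hf k
  · rw [interleave_idxB_fun]; exact continuous_const

theorem hasDerivAt_interleave {f : Fin p → ℝ → ℝ} (hf : ∀ k, Differentiable ℝ (f k)) (c : ℝ)
    (i : Fin (2 * p)) (t : ℝ) :
    HasDerivAt (interleave f c i) (interleave (fun k => deriv (f k)) 0 i t) t := by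
  obtain ⟨k, rfl | rfl⟩ := exists_eq_idxA_or_idxB i
  · rw [interleave_idxA_fun, interleave_idxA]; exact (hf k t).hasDerivAt
  · rw [interleave_idxB_fun, interleave_idxB]; exact hasDerivAt_const t c

theorem eq_oscInput_interleave {ω : Fin p → ℝ} {lam : Fin p → ℝ → ℝ}
    {u : ℕ → Fin (2 * p) → ℝ → ℝ}
    (hu : ∀ (j : ℕ) (t : ℝ) (k : Fin p),
      u j (idxA p k) t = √(2 * ω k * j) * lam k t * cos (ω k * j * t) ∧
      u j (idxB p k) t = √(2 * ω k * j) * sin (ω k * j * t)) :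
    u = oscInput (fun i => ω (pairOf i)) pairPhase (interleave lam 1) := by
  funext j i t
  obtain ⟨k, rfl | rfl⟩ := exists_eq_idxA_or_idxB i
  · simp [oscInput, (hu j t k).1]
  · simp [oscInput, (hu j t k).2, cos_sub_pi_div_two]

theorem eq_pairLimit {ω : Fin p → ℝ} (hωinj : Function.Injective ω)
    {lam : Fin p → ℝ → ℝ} {v : List (Fin (2 * p)) → ℝ → ℝ}
    (hv1 : ∀ k : Fin p, v [idxA p k, idxB p k] = lam k)
    (hv2 : ∀ k : Fin p, v [idxB p k, idxA p k] = fun t => -lam k t)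
    (hv0 : ∀ I : List (Fin (2 * p)), 0 < I.length → I.length ≤ 2 →
      (∀ k : Fin p, I ≠ [idxA p k, idxB p k] ∧ I ≠ [idxB p k, idxA p k]) →
      v I = fun _ => 0) (i i' : Fin (2 * p)) :
    v [i, i'] = fun t => if ω (pairOf i) = ω (pairOf i') then
      interleave lam 1 i t * interleave lam 1 i' t * sin (pairPhase i' - pairPhase i) else 0 := by
  obtain ⟨k, rfl | rfl⟩ := exists_eq_idxA_or_idxB i <;>
    obtain ⟨l, rfl | rfl⟩ := exists_eq_idxA_or_idxB i' <;>
    by_cases hkl : k = l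
  all_goals first
    | (subst hkl; first | rw [hv1] | rw [hv2]); funext t; simp
    | rw [hv0 _ (by simp) (by simp) (fun n => by simp <;> grind)]
      funext t; simp [hωinj.eq_iff, hkl]

end Pairs

theorem stmt9_general (p : ℕ) (ω : Fin p → ℝ) (hωpos : ∀ k, 0 < ω k)
    (hωinj : Function.Injective ω)
    (lam : Fin p → ℝ → ℝ)
    (hlam : ∀ k, (∃ c : ℝ, ∀ t, |lam k t| ≤ c) ∧ ContDiff ℝ 1 (lam k) ∧
      ∃ c : ℝ, ∀ t, |deriv (lam k) t| ≤ c)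
    (u : ℕ → Fin (2 * p) → ℝ → ℝ)
    (hu : ∀ (j : ℕ) (t : ℝ) (k : Fin p),
      u j (idxA p k) t = Real.sqrt (2 * ω k * j) * lam k t * Real.cos (ω k * j * t) ∧
      u j (idxB p k) t = Real.sqrt (2 * ω k * j) * Real.sin (ω k * j * t))
    (v : List (Fin (2 * p)) → ℝ → ℝ)
    (hv1 : ∀ k : Fin p, v [idxA p k, idxB p k] = lam k)
    (hv2 : ∀ k : Fin p, v [idxB p k, idxA p k] = fun t => -lam k t)
    (hv0 : ∀ I : List (Fin (2 * p)), 0 < I.length → I.length ≤ 2 →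
      (∀ k : Fin p, I ≠ [idxA p k, idxB p k] ∧ I ≠ [idxB p k, idxA p k]) →
      v I = fun _ => 0) :
    GDConvUnif (2 * p) 2 u v := by
  rw [eq_oscInput_interleave hu]
  refine gdConvUnif_oscInput (fun i => hωpos (pairOf i))
    (hasDerivAt_interleave (fun k => (hlam k).2.1.differentiable one_ne_zero) 1)
    (continuous_interleave (fun k => (hlam k).2.1.continuous_deriv le_rfl) 0)
    (exists_abs_interleave_le (fun k => (hlam k).1) 1)
    (exists_abs_interleave_le (fun k => (hlam k).2.2) 0)
    (fun i => hv0 [i] (by simp) (by simp) (by simp)) (eq_pairLimit hωinj hv1 hv2 hv0)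

/-- Let `ω₁,…,ω_p` be pairwise distinct positive reals and let each
`λ_k : ℝ → ℝ` be bounded, `C¹` with bounded derivative.  Then the sequence of ordinary
inputs `u^j_{2k-1}(t) = √(2ω_k j)·λ_k(t)·cos(ω_k j t)`,
`u^j_{2k}(t) = √(2ω_k j)·sin(ω_k j t)` GD(2)-converges uniformly to the polynomial input
`v` of order `≤ 2` with `v_{(2k-1,2k)} = λ_k`, `v_{(2k,2k-1)} = -λ_k`, and `v_I = 0`
otherwise. -/
theorem stmt9 (p : ℕ) (hp : 1 ≤ p) (ω : Fin p → ℝ) (hωpos : ∀ k, 0 < ω k)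
    (hωinj : Function.Injective ω)
    (lam : Fin p → ℝ → ℝ)
    (hlam : ∀ k, (∃ c : ℝ, ∀ t, |lam k t| ≤ c) ∧ ContDiff ℝ 1 (lam k) ∧
      ∃ c : ℝ, ∀ t, |deriv (lam k) t| ≤ c)
    (u : ℕ → Fin (2 * p) → ℝ → ℝ)
    (hu : ∀ (j : ℕ) (t : ℝ) (k : Fin p),
      u j (idxA p k) t = Real.sqrt (2 * ω k * j) * lam k t * Real.cos (ω k * j * t) ∧
      u j (idxB p k) t = Real.sqrt (2 * ω k * j) * Real.sin (ω k * j * t))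
    (v : List (Fin (2 * p)) → ℝ → ℝ)
    (hv1 : ∀ k : Fin p, v [idxA p k, idxB p k] = lam k)
    (hv2 : ∀ k : Fin p, v [idxB p k, idxA p k] = fun t => -lam k t)
    (hv0 : ∀ I : List (Fin (2 * p)), 0 < I.length → I.length ≤ 2 →
      (∀ k : Fin p, I ≠ [idxA p k, idxB p k] ∧ I ≠ [idxB p k, idxA p k]) →
      v I = fun _ => 0) :
    GDConvUnif (2 * p) 2 u v :=
  stmt9_general p ω hωpos hωinj lam hlam u hu v hv1 hv2 hv0
end

section
/- Let U ⊆ ℝⁿ be open and let ψ : U → [0,∞) be a nonnegative function of class C². Then the function √ψ : U → ℝ is locally Lipschitz continuous, and the derivative of ψ is locally bounded by a multiple of √ψ: every x ∈ U has a neighborhood V ⊆ U and a constant c > 0 such that ‖Dψ(y)‖ ≤ c·√(ψ(y)) for all y ∈ V. -/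
/-!
Glaeser's inequality. Near a point where `D²ψ` is bounded by `M`, Taylor's formula and
`ψ(y ± v) ≥ 0` give `|Dψ(y) v| ≤ ψ(y) + M‖v‖²` for small `v`, hence
`‖Dψ(y)‖ ≤ ψ(y)/t + M t` for every small `t > 0`; taking `t ≈ √(ψ(y)/M)` yields
`‖Dψ(y)‖ ≤ c √ψ(y)`. Feeding this back into Taylor's formula gives
`ψ(z) ≤ (√ψ(y) + C‖z - y‖)²`, which is the local Lipschitz bound for `√ψ`.
-/

open Filter Topology Metric NNReal

theorem le_mul_sqrt_of_forall_le_div_add_mul {p a M r : ℝ} (ha : 0 ≤ a) (hM : 0 < M)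
    (hr : 0 < r) (h : ∀ t, 0 < t → t ≤ r → p ≤ a / t + M * t) :
    p ≤ (2 * √M + √a / r) * √a := by
  obtain ⟨s, hs, rfl⟩ : ∃ s, 0 ≤ s ∧ a = s ^ 2 := ⟨√a, Real.sqrt_nonneg a, (Real.sq_sqrt ha).symm⟩
  obtain ⟨m, hm, rfl⟩ : ∃ m, 0 < m ∧ M = m ^ 2 :=
    ⟨√M, Real.sqrt_pos.2 hM, (Real.sq_sqrt hM.le).symm⟩
  rw [Real.sqrt_sq hs, Real.sqrt_sq hm.le]
  rcases hs.eq_or_lt with rfl | hs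
  · by_contra! hp
    have hp : 0 < p := by simpa using hp
    set t := min r (p / (2 * m ^ 2))
    have ht : 0 < t := lt_min hr (by positivity)
    have hmt : m ^ 2 * t ≤ p / 2 :=
      calc m ^ 2 * t ≤ m ^ 2 * (p / (2 * m ^ 2)) := by gcongr; exact min_le_right _ _
        _ = p / 2 := by field_simp
    have := h t ht (min_le_left _ _)
    rw [zero_pow two_ne_zero, zero_div, zero_add] at this
    linarith
  by_cases hsm : s / m ≤ r
  · calc p ≤ s ^ 2 / (s / m) + m ^ 2 * (s / m) := h _ (by positivity) hsm
      _ = 2 * m * s := by field_simp; ring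
      _ ≤ (2 * m + s / r) * s := by nlinarith [div_pos hs hr]
  · rw [not_le, lt_div_iff₀ hm] at hsm
    calc p ≤ s ^ 2 / r + m ^ 2 * r := h r hr le_rfl
      _ = (s / r) * s + m * (r * m) := by field_simp
      _ ≤ (2 * m + s / r) * s := by nlinarith

theorem sqrt_le_sqrt_add_mul_of_le {a b c d M : ℝ} (ha : 0 ≤ a) (hc : 0 ≤ c) (hd : 0 ≤ d)
    (hM : 0 ≤ M) (h : b ≤ a + c * √a * d + M * d ^ 2) : √b ≤ √a + (c + √M) * d := by
  rw [Real.sqrt_le_left (by positivity)]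
  have hsa := Real.sq_sqrt ha
  have hsM := Real.sq_sqrt hM
  have h1 : 0 ≤ √a * d := by positivity
  have h2 : 0 ≤ √M * d := by positivity
  nlinarith [mul_nonneg hc h1, mul_nonneg (Real.sqrt_nonneg M) h1, sq_nonneg (c * d),
    mul_nonneg (mul_nonneg hc hd) h2]

variable {E F : Type*} [NormedAddCommGroup E] [NormedSpace ℝ E]
  [NormedAddCommGroup F] [NormedSpace ℝ F]

theorem Convex.norm_image_sub_sub_le_of_lipschitzOnWith {f : E → F} {f' : E → E →L[ℝ] F}
    {s : Set E} {K : ℝ≥0} (hs : Convex ℝ s) (hf : ∀ w ∈ s, HasFDerivAt f (f' w) w)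
    (hf' : LipschitzOnWith K f' s) {y z : E} (hy : y ∈ s) (hz : z ∈ s) :
    ‖f z - f y - f' y (z - y)‖ ≤ K * ‖z - y‖ ^ 2 := by
  -- the mean value inequality on `s ∩ closedBall y ‖z - y‖`, where `‖f' w - f' y‖ ≤ K ‖z - y‖`
  have h := (hs.inter (convex_closedBall y ‖z - y‖)).norm_image_sub_le_of_norm_hasFDerivWithin_le'
    (f := f) (φ := f' y) (C := K * ‖z - y‖) (fun w hw => (hf w hw.1).hasFDerivWithinAt)
    (fun w hw => (hf'.norm_sub_le hw.1 hy).trans (by gcongr; simpa [dist_eq_norm] using hw.2))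
    ⟨hy, mem_closedBall_self (norm_nonneg _)⟩ ⟨hz, by simp [dist_eq_norm]⟩
  rwa [mul_assoc, ← sq] at h

theorem ContinuousLinearMap.norm_le_div_add_mul_of_abs_apply_le {L : E →L[ℝ] ℝ}
    {a M r t : ℝ} (ha : 0 ≤ a) (hM : 0 ≤ M) (ht : 0 < t) (htr : t ≤ r)
    (h : ∀ v, ‖v‖ ≤ r → |L v| ≤ a + M * ‖v‖ ^ 2) : ‖L‖ ≤ a / t + M * t := by
  refine L.opNorm_le_of_unit_norm (by positivity) fun u hu => ?_
  have := h (t • u) (by rwa [norm_smul, hu, mul_one, Real.norm_of_nonneg ht.le])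
  rw [map_smul, smul_eq_mul, abs_mul, abs_of_pos ht, norm_smul, hu, mul_one,
    Real.norm_of_nonneg ht.le] at this
  rw [Real.norm_eq_abs, div_add' _ _ _ ht.ne', le_div_iff₀ ht]
  nlinarith

theorem norm_le_mul_sqrt_of_nonneg_of_taylor {f : E → ℝ} {L : E →L[ℝ] ℝ} {y : E} {r M : ℝ}
    (hr : 0 < r) (hM : 0 < M) (hf : ∀ z ∈ closedBall y r, 0 ≤ f z)
    (hT : ∀ z ∈ closedBall y r, |f z - f y - L (z - y)| ≤ M * ‖z - y‖ ^ 2) :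
    ‖L‖ ≤ (2 * √M + √(f y) / r) * √(f y) := by
  have hneg : ∀ v, ‖v‖ ≤ r → -L v ≤ f y + M * ‖v‖ ^ 2 := fun v hv => by
    have hz : y + v ∈ closedBall y r := by simpa [dist_eq_norm] using hv
    have hTv := hT _ hz
    rw [add_sub_cancel_left] at hTv
    linarith [(abs_le.1 hTv).2, hf _ hz]
  have habs : ∀ v, ‖v‖ ≤ r → |L v| ≤ f y + M * ‖v‖ ^ 2 := fun v hv =>
    abs_le.2 ⟨by linarith [hneg v hv], by simpa using hneg (-v) (by rwa [norm_neg])⟩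
  exact le_mul_sqrt_of_forall_le_div_add_mul (hf y (mem_closedBall_self hr.le)) hM hr
    fun t ht htr => L.norm_le_div_add_mul_of_abs_apply_le (hf y (mem_closedBall_self hr.le))
      hM.le ht htr habs

namespace ContDiffAt

variable {x : E}

theorem exists_ball_norm_image_sub_sub_le {f : E → F} (hf : ContDiffAt ℝ 2 f x) :
    ∃ ε > 0, ∃ M > 0, ∀ y ∈ ball x ε, ∀ z ∈ ball x ε,
      ‖f z - f y - fderiv ℝ f y (z - y)‖ ≤ M * ‖z - y‖ ^ 2 := by
  have hcont : ContinuousAt (fderiv ℝ (fderiv ℝ f)) x :=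
    ((hf.fderiv_right (m := 1) (by norm_num)).fderiv_right (m := 0) le_rfl).continuousAt
  set M : ℝ≥0 := ‖fderiv ℝ (fderiv ℝ f) x‖₊ + 1
  have hM : ∀ᶠ y in 𝓝 x, ‖fderiv ℝ (fderiv ℝ f) y‖₊ < M :=
    (continuous_nnnorm.continuousAt.comp hcont).eventually_lt continuousAt_const (lt_add_one _)
  obtain ⟨ε, hε, hball⟩ := eventually_nhds_iff_ball.1 <| (hf.eventually (by simp)).and hM
  have hf' : LipschitzOnWith M (fderiv ℝ f) (ball x ε) :=
    (convex_ball x ε).lipschitzOnWith_of_nnnorm_fderiv_le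
      (fun w hw => ((hball w hw).1.fderiv_right (m := 1) (by norm_num)).differentiableAt
        one_ne_zero)
      (fun w hw => (hball w hw).2.le)
  exact ⟨ε, hε, M, by positivity, fun y hy z hz =>
    (convex_ball x ε).norm_image_sub_sub_le_of_lipschitzOnWith
      (fun w hw => ((hball w hw).1.differentiableAt two_ne_zero).hasFDerivAt) hf' hy hz⟩

variable {f : E → ℝ}

theorem eventually_norm_fderiv_le_mul_sqrt (hf : ContDiffAt ℝ 2 f x)
    (hf0 : ∀ᶠ y in 𝓝 x, 0 ≤ f y) : ∃ c > 0, ∀ᶠ y in 𝓝 x, ‖fderiv ℝ f y‖ ≤ c * √(f y) := by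
  obtain ⟨ε, hε, M, hM, hT⟩ := hf.exists_ball_norm_image_sub_sub_le
  obtain ⟨δ, hδ, hbound⟩ := eventually_nhds_iff_ball.1 <|
    hf0.and (hf.continuousAt.eventually_lt continuousAt_const (lt_add_one (f x)))
  set r := min ε δ / 2 with hr_def
  have hr : 0 < r := half_pos (lt_min hε hδ)
  refine ⟨2 * √M + √(f x + 1) / r, by positivity, ?_⟩
  filter_upwards [ball_mem_nhds x hr] with y hy
  have hsub : closedBall y r ⊆ ball x (min ε δ) :=
    closedBall_subset_ball' (by rw [mem_ball] at hy; linarith)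
  have hδ' : ∀ z ∈ closedBall y r, 0 ≤ f z ∧ f z < f x + 1 := fun z hz =>
    hbound z (ball_subset_ball (min_le_right _ _) (hsub hz))
  have hε' : closedBall y r ⊆ ball x ε := hsub.trans (ball_subset_ball (min_le_left _ _))
  calc ‖fderiv ℝ f y‖ ≤ (2 * √M + √(f y) / r) * √(f y) :=
        norm_le_mul_sqrt_of_nonneg_of_taylor hr hM (fun z hz => (hδ' z hz).1)
          fun z hz => hT y (hε' (mem_closedBall_self hr.le)) z (hε' hz)
    _ ≤ (2 * √M + √(f x + 1) / r) * √(f y) := by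
        gcongr
        exact (hδ' y (mem_closedBall_self hr.le)).2.le

theorem exists_mem_nhds_abs_sqrt_sub_le (hf : ContDiffAt ℝ 2 f x)
    (hf0 : ∀ᶠ y in 𝓝 x, 0 ≤ f y) :
    ∃ V ∈ 𝓝 x, ∃ L > (0 : ℝ), ∀ y ∈ V, ∀ z ∈ V, |√(f z) - √(f y)| ≤ L * ‖z - y‖ := by
  obtain ⟨c, hc, hD⟩ := hf.eventually_norm_fderiv_le_mul_sqrt hf0
  obtain ⟨ε, hε, M, hM, hT⟩ := hf.exists_ball_norm_image_sub_sub_le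
  obtain ⟨δ, hδ, hbound⟩ := eventually_nhds_iff_ball.1 (hD.and hf0)
  set V := ball x (min ε δ)
  have hup : ∀ y ∈ V, ∀ z ∈ V, √(f z) ≤ √(f y) + (c + √M) * ‖z - y‖ := by
    intro y hy z hz
    obtain ⟨hDy, hfy⟩ := hbound y (ball_subset_ball (min_le_right _ _) hy)
    have hTy := hT y (ball_subset_ball (min_le_left _ _) hy) z
      (ball_subset_ball (min_le_left _ _) hz)
    have hlin : fderiv ℝ f y (z - y) ≤ c * √(f y) * ‖z - y‖ :=
      (le_abs_self _).trans <| ((fderiv ℝ f y).le_opNorm _).trans <|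
        mul_le_mul_of_nonneg_right hDy (norm_nonneg _)
    rw [Real.norm_eq_abs] at hTy
    exact sqrt_le_sqrt_add_mul_of_le hfy hc.le (norm_nonneg _) hM.le
      (by linarith [(abs_le.1 hTy).2])
  refine ⟨V, ball_mem_nhds x (lt_min hε hδ), c + √M, by positivity, fun y hy z hz => ?_⟩
  rw [abs_sub_le_iff]
  constructor
  · linarith [hup y hy z hz]
  · rw [norm_sub_rev]
    linarith [hup z hz y hy]

end ContDiffAt

/-- If `ψ : U → [0,∞)` is a nonnegative `C²` function on an open set
`U ⊆ ℝⁿ`, then `√ψ` is locally Lipschitz continuous, and the derivative of `ψ` is locally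
bounded by a multiple of `√ψ`. -/
theorem stmt15 {n : ℕ} {U : Set (EuclideanSpace ℝ (Fin n))} (hU : IsOpen U)
    (ψ : EuclideanSpace ℝ (Fin n) → ℝ) (hψ0 : ∀ x ∈ U, 0 ≤ ψ x)
    (hψC2 : ContDiffOn ℝ 2 ψ U) :
    (∀ x ∈ U, ∃ V ∈ 𝓝 x, ∃ L > (0:ℝ), ∀ y ∈ V ∩ U, ∀ z ∈ V ∩ U,
      |Real.sqrt (ψ z) - Real.sqrt (ψ y)| ≤ L * ‖z - y‖) ∧
    (∀ x ∈ U, ∃ V ∈ 𝓝 x, ∃ c > (0:ℝ), ∀ y ∈ V ∩ U,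
      ‖fderiv ℝ ψ y‖ ≤ c * Real.sqrt (ψ y)) := by
  have hlocal : ∀ x ∈ U, ContDiffAt ℝ 2 ψ x ∧ ∀ᶠ y in 𝓝 x, 0 ≤ ψ y := fun x hx =>
    ⟨hψC2.contDiffAt (hU.mem_nhds hx), eventually_of_mem (hU.mem_nhds hx) hψ0⟩
  refine ⟨fun x hx => ?_, fun x hx => ?_⟩
  · obtain ⟨V, hV, L, hL, hLip⟩ :=
      (hlocal x hx).1.exists_mem_nhds_abs_sqrt_sub_le (hlocal x hx).2
    exact ⟨V, hV, L, hL, fun y hy z hz => hLip y hy.1 z hz.1⟩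
  · obtain ⟨c, hc, hD⟩ := (hlocal x hx).1.eventually_norm_fderiv_le_mul_sqrt (hlocal x hx).2
    obtain ⟨V, hV, hDV⟩ := hD.exists_mem
    exact ⟨V, hV, c, hc, fun y hy => hDV y hy.1⟩
end

section
/- Let r ≥ 1 be an integer. Let h : ℝ → ℝ be continuous, of class C^r on (0,∞), and such that for each ν = 0,1,…,r the function y ↦ y^{ν−1/2}·h^{(ν)}(y) remains bounded as y ↓ 0 (i.e. is bounded on (0,ε] for some ε > 0). Let U ⊆ ℝⁿ be open and let ψ : U → [0,∞) be a nonnegative C² function. Then the composition h ∘ ψ : U → ℝ is locally Lipschitz continuous. -/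
/-!
Write `h ∘ ψ = (h ∘ sq) ∘ √ψ` on `U`. The function `s ↦ h (s²)` has derivative `2 s h'(s²)`,
which the bound for `ν = 1` keeps bounded near `0`, so it is locally Lipschitz on `[0, ∞)`.
For `√ψ`, the key is Glaeser's inequality `‖Dψ‖² ≤ K ψ` for nonnegative functions with
Lipschitz derivative: from `0 ≤ ψ(y + w) ≤ ψ y + Dψ(y) w + M ‖w‖²` for `±w` one gets
`‖Dψ y‖ t ≤ ψ y + M t²` for all small `t`, and optimizing in `t` gives the claim. Hence
`D√ψ = Dψ / (2 √ψ)` stays bounded, and `√ψ` is locally Lipschitz.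
-/

open Filter Topology Set Metric
open scoped NNReal

theorem LocallyLipschitzOn.comp {α β γ : Type*} [PseudoEMetricSpace α] [PseudoEMetricSpace β]
    [PseudoEMetricSpace γ] {f : β → γ} {g : α → β} {s : Set α} {t : Set β}
    (hf : LocallyLipschitzOn t f) (hg : LocallyLipschitzOn s g) (hst : MapsTo g s t) :
    LocallyLipschitzOn s (f ∘ g) := by
  intro x hx
  obtain ⟨Kg, u, hu, hgu⟩ := hg hx
  obtain ⟨Kf, v, hv, hfv⟩ := hf (hst hx)
  have hcont : ContinuousWithinAt g s x :=
    (hgu.continuousOn x (mem_of_mem_nhdsWithin hx hu)).mono_of_mem_nhdsWithin hu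
  have hgv : g ⁻¹' v ∈ 𝓝[s] x :=
    (tendsto_nhdsWithin_iff.2 ⟨hcont, eventually_nhdsWithin_of_forall hst⟩) hv
  exact ⟨Kf * Kg, u ∩ g ⁻¹' v, inter_mem hu hgv,
    hfv.comp (hgu.mono inter_subset_left) fun y hy => hy.2⟩

theorem sq_le_mul_of_forall_mul_le_add_sq {G p P M T : ℝ} (hG : 0 ≤ G) (hp : 0 ≤ p)
    (hpP : p ≤ P) (hM : 0 ≤ M) (hT : 0 < T)
    (H : ∀ t, 0 < t → t ≤ T → G * t ≤ p + M * t ^ 2) :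
    G ^ 2 ≤ (6 * M + 2 * P / T ^ 2) * p := by
  set A := 3 * M + P / T ^ 2
  have hPT : 0 ≤ P / T ^ 2 := by have := hp.trans hpP; positivity
  have hMA : 2 * M ≤ A := by simp only [A]; linarith
  rw [show 6 * M + 2 * P / T ^ 2 = 2 * A by simp only [A]; ring]
  rcases hG.eq_or_lt with rfl | hG
  · nlinarith
  have hGA : G ≤ A * T := by
    have h := H T hT le_rfl
    have : A * T * T = 3 * M * T ^ 2 + P := by simp only [A]; field_simp
    nlinarith
  have hA : 0 < A := pos_of_mul_pos_left (hG.trans_le hGA) hT.le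
  -- at `t = G / A` the term `M t²` is at most half of `G t`, because `2 M ≤ A`
  have h := H (G / A) (by positivity) (by rwa [div_le_iff₀ hA, mul_comm])
  have h2 : G * (G / A) * A ^ 2 ≤ (p + M * (G / A) ^ 2) * A ^ 2 := by gcongr
  have e1 : G * (G / A) * A ^ 2 = G ^ 2 * A := by field_simp
  have e2 : (p + M * (G / A) ^ 2) * A ^ 2 = p * A ^ 2 + M * G ^ 2 := by field_simp
  refine le_of_mul_le_mul_right ?_ hA
  nlinarith [sq_nonneg G]

theorem Convex.norm_image_sub_sub_le_of_lipschitz_fderiv {E F : Type*} [NormedAddCommGroup E]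
    [NormedSpace ℝ E] [NormedAddCommGroup F] [NormedSpace ℝ F] {f : E → F} {f' : E → E →L[ℝ] F}
    {s : Set E} {y : E} {M : ℝ} (hs : Convex ℝ s) (hf : ∀ a ∈ s, HasFDerivWithinAt f (f' a) s a)
    (hy : y ∈ s) (hf' : ∀ a ∈ s, ‖f' a - f' y‖ ≤ M * ‖a - y‖) {a : E} (ha : a ∈ s) :
    ‖f a - f y - f' y (a - y)‖ ≤ M * ‖a - y‖ ^ 2 := by
  rcases eq_or_ne a y with rfl | hay
  · simp
  have hM : 0 ≤ M := nonneg_of_mul_nonneg_left ((norm_nonneg _).trans (hf' a ha))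
    (norm_pos_iff.2 (sub_ne_zero.2 hay))
  have hbound : ∀ b ∈ s ∩ closedBall y ‖a - y‖, ‖f' b - f' y‖ ≤ M * ‖a - y‖ := fun b hb =>
    (hf' b hb.1).trans (mul_le_mul_of_nonneg_left (by simpa [dist_eq_norm] using hb.2) hM)
  have h := (hs.inter (convex_closedBall y ‖a - y‖)).norm_image_sub_le_of_norm_hasFDerivWithin_le'
    (fun b hb => (hf b hb.1).mono inter_subset_left) hbound
    ⟨hy, mem_closedBall_self (norm_nonneg _)⟩ ⟨ha, by rw [mem_closedBall, dist_eq_norm]⟩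
  rwa [mul_assoc, ← sq] at h

section

variable {E : Type*} [NormedAddCommGroup E] [NormedSpace ℝ E]

theorem norm_fderiv_sq_le_of_nonneg {f : E → ℝ} {f' : E → E →L[ℝ] ℝ} {y : E} {T M P : ℝ}
    (hT : 0 < T) (hM : 0 ≤ M) (hf : ∀ a ∈ closedBall y T, HasFDerivAt f (f' a) a)
    (hf' : ∀ a ∈ closedBall y T, ‖f' a - f' y‖ ≤ M * ‖a - y‖)
    (hnn : ∀ a ∈ closedBall y T, 0 ≤ f a) (hP : f y ≤ P) :
    ‖f' y‖ ^ 2 ≤ (6 * M + 2 * P / T ^ 2) * f y := by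
  have hy : y ∈ closedBall y T := mem_closedBall_self hT.le
  have taylor : ∀ w : E, ‖w‖ ≤ T → |f (y + w) - f y - f' y w| ≤ M * ‖w‖ ^ 2 := by
    intro w hw
    have hmem : y + w ∈ closedBall y T := by simpa [dist_eq_norm] using hw
    simpa using (convex_closedBall y T).norm_image_sub_sub_le_of_lipschitz_fderiv
      (fun a ha => (hf a ha).hasFDerivWithinAt) hy hf' hmem
  have hdir : ∀ w : E, ‖w‖ ≤ T → |f' y w| ≤ f y + M * ‖w‖ ^ 2 := by
    intro w hw
    have h₁ := taylor w hw
    have h₂ := taylor (-w) (by rwa [norm_neg])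
    have n₁ := hnn (y + w) (by simpa [dist_eq_norm] using hw)
    have n₂ := hnn (y + -w) (by simpa [dist_eq_norm] using hw)
    rw [map_neg, norm_neg] at h₂
    rw [abs_le] at h₁ h₂ ⊢
    constructor <;> linarith
  refine sq_le_mul_of_forall_mul_le_add_sq (norm_nonneg _) (hnn y hy) hP hM hT fun t ht htT => ?_
  rw [← le_div_iff₀ ht]
  refine ContinuousLinearMap.opNorm_le_of_unit_norm (by have := hnn y hy; positivity) fun v hv => ?_
  rw [le_div_iff₀ ht, Real.norm_eq_abs]
  have := hdir (t • v) (by rw [norm_smul, hv, Real.norm_of_nonneg ht.le, mul_one]; exact htT)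
  rwa [map_smul, smul_eq_mul, abs_mul, abs_of_pos ht, norm_smul, hv, Real.norm_of_nonneg ht.le,
    mul_one, mul_comm] at this

theorem Convex.lipschitzOnWith_sqrt_of_norm_fderiv_sq_le {f : E → ℝ} {f' : E → E →L[ℝ] ℝ}
    {s : Set E} {K : ℝ} (hs : Convex ℝ s) (hf : ∀ a ∈ s, HasFDerivAt f (f' a) a)
    (hnn : ∀ a ∈ s, 0 ≤ f a) (hK : ∀ a ∈ s, ‖f' a‖ ^ 2 ≤ K * f a) :
    LipschitzOnWith (√K / 2).toNNReal (fun a => √(f a)) s := by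
  refine LipschitzOnWith.of_dist_le' fun y hy z hz => ?_
  rw [dist_eq_norm, dist_eq_norm]
  -- `√(f + δ)` is differentiable with derivative bounded by `√K / 2`; then let `δ → 0`.
  have hδ : ∀ δ > (0 : ℝ), ‖√(f y + δ) - √(f z + δ)‖ ≤ √K / 2 * ‖y - z‖ := by
    intro δ hδ
    refine hs.norm_image_sub_le_of_norm_hasFDerivWithin_le (f := fun a => √(f a + δ))
      (fun a ha => (((hf a ha).add_const δ).sqrt (by linarith [hnn a ha])).hasFDerivWithinAt)
      (fun a ha => ?_) hz hy
    have hpos : 0 < √(f a + δ) := Real.sqrt_pos.2 (by linarith [hnn a ha])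
    rw [norm_smul, Real.norm_of_nonneg (by positivity), one_div, ← div_eq_inv_mul,
      div_le_iff₀ (by positivity)]
    calc ‖f' a‖ ≤ √(K * f a) := by simpa using Real.abs_le_sqrt (hK a ha)
      _ = √K * √(f a) := Real.sqrt_mul' K (hnn a ha)
      _ ≤ √K * √(f a + δ) := by gcongr; linarith
      _ = _ := by ring
  have hlim : Tendsto (fun δ => ‖√(f y + δ) - √(f z + δ)‖) (𝓝[>] 0) (𝓝 ‖√(f y) - √(f z)‖) := by
    refine Tendsto.mono_left ?_ nhdsWithin_le_nhds
    simpa using ((continuous_const.add continuous_id).sqrt.sub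
      (continuous_const.add continuous_id).sqrt).norm.tendsto (0 : ℝ)
  exact le_of_tendsto hlim (eventually_nhdsWithin_of_forall hδ)

theorem ContDiffAt.exists_lipschitzOnWith_sqrt {ψ : E → ℝ} {x : E} (hψ : ContDiffAt ℝ 2 ψ x)
    (hnn : ∀ᶠ y in 𝓝 x, 0 ≤ ψ y) :
    ∃ K, ∃ t ∈ 𝓝 x, LipschitzOnWith K (fun y => √(ψ y)) t := by
  obtain ⟨M, t, ht, hM⟩ := (hψ.fderiv_right (m := 1) le_rfl).exists_lipschitzOnWith
  have hdiff : ∀ᶠ y in 𝓝 x, HasFDerivAt ψ (fderiv ℝ ψ y) y :=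
    (hψ.eventually (by simp)).mono fun y hy => (hy.differentiableAt two_ne_zero).hasFDerivAt
  have hbdd : ∀ᶠ y in 𝓝 x, ψ y ≤ ψ x + 1 :=
    hψ.continuousAt.eventually (ge_mem_nhds (lt_add_one _))
  obtain ⟨ρ, hρ, hball⟩ := Metric.eventually_nhds_iff_ball.1 (hdiff.and (hnn.and (hbdd.and ht)))
  have hsub : ∀ y ∈ ball x (ρ / 2), closedBall y (ρ / 2) ⊆ ball x ρ := fun y hy =>
    closedBall_subset_ball' (by rw [mem_ball] at hy; linarith)
  have hhalf : ball x (ρ / 2) ⊆ ball x ρ := ball_subset_ball (by linarith)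
  refine ⟨_, ball x (ρ / 2), ball_mem_nhds x (by positivity),
    (convex_ball x (ρ / 2)).lipschitzOnWith_sqrt_of_norm_fderiv_sq_le
      (fun a ha => (hball a (hhalf ha)).1) (fun a ha => (hball a (hhalf ha)).2.1)
      (fun y hy => norm_fderiv_sq_le_of_nonneg (half_pos hρ) M.coe_nonneg
        (fun a ha => (hball a (hsub y hy ha)).1) (fun a ha => ?_)
        (fun a ha => (hball a (hsub y hy ha)).2.1) (hball y (hhalf hy)).2.2.1)⟩
  rw [← dist_eq_norm, ← dist_eq_norm]
  exact hM.dist_le_mul a (hball a (hsub y hy ha)).2.2.2 y (hball y (hhalf hy)).2.2.2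

end

theorem lipschitzOnWith_comp_sq_of_abs_sqrt_mul_deriv_le {h : ℝ → ℝ} {ε : ℝ} {C : ℝ≥0}
    (hcont : ContinuousOn h (Icc 0 ε)) (hdiff : DifferentiableOn ℝ h (Ioo 0 ε))
    (hC : ∀ y ∈ Ioo 0 ε, |√y * deriv h y| ≤ C) :
    LipschitzOnWith (2 * C) (fun s => h (s ^ 2)) (Icc 0 √ε) := by
  refine LipschitzOnWith.of_dist_le_mul fun a ha b hb => ?_
  wlog hab : b < a generalizing a b
  · rcases (not_lt.1 hab).eq_or_lt with rfl | hab
    · simp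
    · rw [dist_comm, dist_comm a]; exact this b hb a ha hab
  have hε : 0 < ε := Real.sqrt_pos.1 (hb.1.trans_lt (hab.trans_le ha.2))
  have hsq : ∀ s ∈ Ioo b a, s ^ 2 ∈ Ioo 0 ε := fun s hs =>
    ⟨by nlinarith [hb.1, hs.1], (Real.lt_sqrt (by linarith [hb.1, hs.1])).1 (hs.2.trans_le ha.2)⟩
  obtain ⟨c, hc, hslope⟩ := exists_hasDerivAt_eq_slope (fun s => h (s ^ 2))
    (fun s => deriv h (s ^ 2) * (2 * s)) hab
    (hcont.comp (continuous_pow 2).continuousOn fun s hs =>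
      ⟨sq_nonneg s, (Real.le_sqrt (hb.1.trans hs.1) hε.le).1 (hs.2.trans ha.2)⟩)
    (fun s hs => by
      have hd := (hdiff.differentiableAt (isOpen_Ioo.mem_nhds (hsq s hs))).hasDerivAt
      have hsqd : HasDerivAt (fun s : ℝ => s ^ 2) (2 * s) s := by simpa using hasDerivAt_pow 2 s
      exact hd.comp (h := fun s : ℝ => s ^ 2) s hsqd)
  have hc0 : 0 < c := hb.1.trans_lt hc.1
  have hbound : |deriv h (c ^ 2) * (2 * c)| ≤ 2 * C := by
    have := hC _ (hsq c hc)
    rw [Real.sqrt_sq hc0.le] at this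
    calc |deriv h (c ^ 2) * (2 * c)| = 2 * |c * deriv h (c ^ 2)| := by
          rw [abs_mul, abs_mul, abs_mul, abs_two, abs_of_pos hc0]; ring
      _ ≤ 2 * C := by linarith
  have hab' : 0 < a - b := sub_pos.2 hab
  calc dist (h (a ^ 2)) (h (b ^ 2)) = |deriv h (c ^ 2) * (2 * c)| * (a - b) := by
        rw [Real.dist_eq, hslope, abs_div, abs_of_pos hab', div_mul_cancel₀ _ hab'.ne']
    _ ≤ 2 * C * (a - b) := by gcongr
    _ = _ := by rw [Real.dist_eq, abs_of_pos hab']; push_cast; ring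

theorem locallyLipschitzOn_comp_sq {h : ℝ → ℝ} {ε : ℝ} {C : ℝ≥0} (hcont : ContinuousOn h (Ici 0))
    (hC1 : ContDiffOn ℝ 1 h (Ioi 0)) (hε : 0 < ε) (hC : ∀ y ∈ Ioo 0 ε, |√y * deriv h y| ≤ C) :
    LocallyLipschitzOn (Ici 0) (fun s => h (s ^ 2)) := by
  intro s hs
  rcases (mem_Ici.1 hs).eq_or_lt with rfl | hs
  · exact ⟨_, _, Icc_mem_nhdsGE (Real.sqrt_pos.2 hε),
      lipschitzOnWith_comp_sq_of_abs_sqrt_mul_deriv_le (hcont.mono Icc_subset_Ici_self)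
        ((hC1.differentiableOn one_ne_zero).mono Ioo_subset_Ioi_self) hC⟩
  · obtain ⟨K, t, ht, hK⟩ := ((hC1.contDiffAt (Ioi_mem_nhds (by positivity))).comp s
      (contDiffAt_id.pow 2)).exists_lipschitzOnWith
    exact ⟨K, t, mem_nhdsWithin_of_mem_nhds ht, hK⟩

/-- Let `h : ℝ → ℝ` be continuous, of class `C^r` on `(0,∞)`, and such
that for every `ν = 0,1,…,r` the function `y ↦ y^(ν - 1/2) * h^(ν)(y)` remains bounded as
`y ↓ 0`.  If `ψ : U → [0,∞)` is a nonnegative `C²` function on an open set `U ⊆ ℝⁿ`, then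
`h ∘ ψ` is locally Lipschitz continuous. -/
theorem stmt16 {n : ℕ} (r : ℕ) (hr : 1 ≤ r) (h : ℝ → ℝ) (hcont : Continuous h)
    (hCr : ContDiffOn ℝ r h (Set.Ioi (0:ℝ)))
    (hbd : ∀ ν : ℕ, ν ≤ r → ∃ ε > (0:ℝ), ∃ C : ℝ, ∀ y ∈ Set.Ioc (0:ℝ) ε,
      |y ^ ((ν : ℝ) - 1/2) * iteratedDeriv ν h y| ≤ C)
    {U : Set (EuclideanSpace ℝ (Fin n))} (hU : IsOpen U)
    (ψ : EuclideanSpace ℝ (Fin n) → ℝ) (hψ0 : ∀ x ∈ U, 0 ≤ ψ x)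
    (hψC2 : ContDiffOn ℝ 2 ψ U) :
    ∀ x ∈ U, ∃ V ∈ 𝓝 x, ∃ L > (0:ℝ), ∀ y ∈ V ∩ U, ∀ z ∈ V ∩ U,
      |h (ψ z) - h (ψ y)| ≤ L * ‖z - y‖ := by
  obtain ⟨ε, hε, C, hC⟩ := hbd 1 hr
  have hsq : LocallyLipschitzOn (Ici 0) (fun s => h (s ^ 2)) :=
    locallyLipschitzOn_comp_sq (C := C.toNNReal) hcont.continuousOn
      (hCr.of_le (by exact_mod_cast hr)) hε fun y hy => by
        have := hC y (Ioo_subset_Ioc_self hy)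
        rw [Nat.cast_one, iteratedDeriv_one, show (1 : ℝ) - 1 / 2 = 1 / 2 by norm_num,
          ← Real.sqrt_eq_rpow] at this
        exact this.trans (Real.le_coe_toNNReal C)
  have hsqrt : LocallyLipschitzOn U (fun y => √(ψ y)) := fun x hx => by
    obtain ⟨K, t, ht, hK⟩ := (hψC2.contDiffAt (hU.mem_nhds hx)).exists_lipschitzOnWith_sqrt
      (eventually_of_mem (hU.mem_nhds hx) hψ0)
    exact ⟨K, t, mem_nhdsWithin_of_mem_nhds ht, hK⟩
  intro x hx
  obtain ⟨K, t, ht, hK⟩ := hsq.comp hsqrt (fun y _ => Real.sqrt_nonneg _) hx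
  obtain ⟨V, hV, hVt⟩ := mem_nhdsWithin_iff_exists_mem_nhds_inter.1 ht
  refine ⟨V, hV, K + 1, by positivity, fun y hy z hz => ?_⟩
  have hzy := hK.dist_le_mul z (hVt hz) y (hVt hy)
  simp only [Function.comp_apply, Real.sq_sqrt (hψ0 z hz.2), Real.sq_sqrt (hψ0 y hy.2),
    dist_eq_norm] at hzy
  calc |h (ψ z) - h (ψ y)| ≤ K * ‖z - y‖ := hzy
    _ ≤ (K + 1) * ‖z - y‖ := by gcongr; linarith
end

section
/- Define h_s, h_c : ℝ → ℝ by h_s(y) := √y·sin(log y) and h_c(y) := √y·cos(log y) for y > 0, and h_s(y) := h_c(y) := 0 for y ≤ 0. Then h_s and h_c are infinitely differentiable on (0,∞), and for every nonnegative integer ν the functions y ↦ y^{ν−1/2}·h_s^{(ν)}(y) and y ↦ y^{ν−1/2}·h_c^{(ν)}(y) remain bounded as y ↓ 0; in particular they are bounded on (0,1]. -/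
open Filter Topology

/-- `h_s(y) = √y · sin(log y)` for `y > 0`, and `0` for `y ≤ 0`. -/
noncomputable def hS (y : ℝ) : ℝ :=
  if 0 < y then Real.sqrt y * Real.sin (Real.log y) else 0

/-- `h_c(y) = √y · cos(log y)` for `y > 0`, and `0` for `y ≤ 0`. -/
noncomputable def hC (y : ℝ) : ℝ :=
  if 0 < y then Real.sqrt y * Real.cos (Real.log y) else 0

/-!
On `(0,∞)` both `h_s` and `h_c` have the form `y ^ p * (a sin (log y) + b cos (log y))`, and
differentiating such a function only lowers `p` by one and changes `(a, b)` linearly. Hence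
`h^(ν)(y) = y ^ (1/2 - ν) * (a_ν sin (log y) + b_ν cos (log y))`, so that
`y ^ (ν - 1/2) * h^(ν)(y)` is bounded by `|a_ν| + |b_ν|` on all of `(0,∞)`.
-/

open Real Set

noncomputable def logOscillation (p a b y : ℝ) : ℝ :=
  y ^ p * (a * sin (log y) + b * cos (log y))

lemma hasDerivAt_logOscillation (p a b : ℝ) {y : ℝ} (hy : 0 < y) :
    HasDerivAt (logOscillation p a b)
      (logOscillation (p - 1) (p * a - b) (a + p * b) y) y := by
  have hpow : HasDerivAt (fun y : ℝ => y ^ p) (p * y ^ (p - 1)) y :=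
    hasDerivAt_rpow_const (Or.inl hy.ne')
  have hlog := hasDerivAt_log hy.ne'
  have hsin := (hasDerivAt_sin (log y)).comp y hlog
  have hcos := (hasDerivAt_cos (log y)).comp y hlog
  refine (hpow.mul ((hsin.const_mul a).add (hcos.const_mul b))).congr_deriv ?_
  simp only [logOscillation, Pi.add_apply, Function.comp_apply, rpow_sub_one hy.ne']
  field_simp
  ring

lemma contDiffOn_logOscillation (p a b : ℝ) {n : WithTop ℕ∞} :
    ContDiffOn ℝ n (logOscillation p a b) (Ioi 0) := fun y hy =>
  have hlog : ContDiffAt ℝ n log y := contDiffAt_log.mpr (ne_of_gt hy)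
  ((contDiffAt_rpow_const_of_ne (ne_of_gt hy)).mul
    ((contDiffAt_const.mul (contDiff_sin.contDiffAt.comp y hlog)).add
      (contDiffAt_const.mul (contDiff_cos.contDiffAt.comp y hlog)))).contDiffWithinAt

lemma exists_iteratedDeriv_eqOn_logOscillation {f : ℝ → ℝ} {p a b : ℝ}
    (hf : EqOn f (logOscillation p a b) (Ioi 0)) (n : ℕ) :
    ∃ a' b' : ℝ, EqOn (iteratedDeriv n f) (logOscillation (p - n) a' b') (Ioi 0) := by
  induction n with
  | zero => exact ⟨a, b, by simpa using hf⟩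
  | succ n ih =>
    obtain ⟨a', b', h⟩ := ih
    refine ⟨(p - n) * a' - b', a' + (p - n) * b', fun y hy => ?_⟩
    rw [iteratedDeriv_succ, h.deriv isOpen_Ioi hy, (hasDerivAt_logOscillation _ _ _ hy).deriv]
    push_cast
    ring_nf

lemma abs_mul_sin_add_mul_cos_le (a b t : ℝ) : |a * sin t + b * cos t| ≤ |a| + |b| :=
  calc |a * sin t + b * cos t| ≤ |a| * |sin t| + |b| * |cos t| := by
        simpa only [abs_mul] using abs_add_le (a * sin t) (b * cos t)
    _ ≤ |a| * 1 + |b| * 1 := by gcongr <;> [exact abs_sin_le_one t; exact abs_cos_le_one t]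
    _ = |a| + |b| := by ring

lemma abs_rpow_neg_mul_logOscillation_le (p a b : ℝ) {y : ℝ} (hy : 0 < y) :
    |y ^ (-p) * logOscillation p a b y| ≤ |a| + |b| := by
  rw [logOscillation, ← mul_assoc, ← rpow_add hy, neg_add_cancel, rpow_zero, one_mul]
  exact abs_mul_sin_add_mul_cos_le a b (log y)

lemma hS_eqOn : EqOn hS (logOscillation (1 / 2) 1 0) (Ioi 0) := fun y hy => by
  simp [hS, logOscillation, mem_Ioi.mp hy, sqrt_eq_rpow]

lemma hC_eqOn : EqOn hC (logOscillation (1 / 2) 0 1) (Ioi 0) := fun y hy => by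
  simp [hC, logOscillation, mem_Ioi.mp hy, sqrt_eq_rpow]

lemma exists_abs_rpow_mul_iteratedDeriv_le {f : ℝ → ℝ} {a b : ℝ}
    (hf : EqOn f (logOscillation (1 / 2) a b) (Ioi 0)) (ν : ℕ) :
    ∃ C : ℝ, ∀ y ∈ Ioi (0 : ℝ), |y ^ ((ν : ℝ) - 1 / 2) * iteratedDeriv ν f y| ≤ C := by
  obtain ⟨a', b', h⟩ := exists_iteratedDeriv_eqOn_logOscillation hf ν
  refine ⟨|a'| + |b'|, fun y hy => ?_⟩
  rw [h hy, ← neg_sub]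
  exact abs_rpow_neg_mul_logOscillation_le _ a' b' hy

/-- The functions `h_s` and `h_c` are smooth on `(0,∞)` and, for every
`ν ∈ ℕ`, the functions `y ↦ y^(ν-1/2) h_s^(ν)(y)` and `y ↦ y^(ν-1/2) h_c^(ν)(y)` remain
bounded as `y ↓ 0`; in particular they are bounded on `(0,1]`. -/
theorem stmt17 :
    ContDiffOn ℝ (⊤ : ℕ∞) hS (Set.Ioi (0:ℝ)) ∧
    ContDiffOn ℝ (⊤ : ℕ∞) hC (Set.Ioi (0:ℝ)) ∧
    ∀ ν : ℕ, ∃ C : ℝ, ∀ y ∈ Set.Ioc (0:ℝ) 1,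
      |y ^ ((ν : ℝ) - 1/2) * iteratedDeriv ν hS y| ≤ C ∧
      |y ^ ((ν : ℝ) - 1/2) * iteratedDeriv ν hC y| ≤ C := by
  refine ⟨(contDiffOn_logOscillation _ _ _).congr hS_eqOn,
    (contDiffOn_logOscillation _ _ _).congr hC_eqOn, fun ν => ?_⟩
  obtain ⟨C₁, hC₁⟩ := exists_abs_rpow_mul_iteratedDeriv_le hS_eqOn ν
  obtain ⟨C₂, hC₂⟩ := exists_abs_rpow_mul_iteratedDeriv_le hC_eqOn ν
  exact ⟨max C₁ C₂, fun y hy =>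
    ⟨(hC₁ y hy.1).trans (le_max_left _ _), (hC₂ y hy.1).trans (le_max_right _ _)⟩⟩
end

section
/- Let E be a real normed space, U ⊆ E open, g : U → E a C¹ vector field, and ψ : U → ℝ a C¹ function with ψ(x) > 0 for all x ∈ U. Define the vector fields f₁(x) := √(ψ(x))·sin(log ψ(x))·g(x) and f₂(x) := √(ψ(x))·cos(log ψ(x))·g(x) on U. Then for every x ∈ U the Lie bracket [f₁,f₂](x) := Df₂(x)(f₁(x)) − Df₁(x)(f₂(x)) equals −(Dψ(x)(g(x)))·g(x), i.e. [f₁,f₂] = −(gψ)·g where gψ is the Lie derivative of ψ along g. -/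
/-!
Both fields are multiples of the single field `g`, so in `[a • g, b • g]` the terms involving
`Dg` cancel and only `(a · gb - b · ga) • g` survives. With `a = h_s ∘ ψ` and `b = h_c ∘ ψ` the
chain rule turns the scalar factor into the Wronskian `h_s h_c' - h_c h_s'` evaluated at `ψ`,
times `gψ`; for `h_s = √t sin(log t)`, `h_c = √t cos(log t)` that Wronskian is identically `-1`
by `sin² + cos² = 1`.
-/

open Real

namespace VectorField

variable {𝕜 : Type*} [NontriviallyNormedField 𝕜] {E : Type*} [NormedAddCommGroup E]
  [NormedSpace 𝕜 E] {V : E → E} {x : E}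

lemma lieBracket_smul_smul_self {a b : E → 𝕜} (ha : DifferentiableAt 𝕜 a x)
    (hb : DifferentiableAt 𝕜 b x) (hV : DifferentiableAt 𝕜 V x) :
    lieBracket 𝕜 (fun y ↦ a y • V y) (fun y ↦ b y • V y) x =
      (a x * fderiv 𝕜 b x (V x) - b x * fderiv 𝕜 a x (V x)) • V x := by
  rw [lieBracket_smul_left ha hV, lieBracket_smul_right hb hV, lieBracket_self]
  simp only [map_smul, Pi.zero_apply, smul_zero, add_zero, smul_eq_mul]
  module

lemma lieBracket_comp_smul_comp_smul {φ₁ φ₂ : 𝕜 → 𝕜} {d₁ d₂ : 𝕜} {ψ : E → 𝕜}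
    (hφ₁ : HasDerivAt φ₁ d₁ (ψ x)) (hφ₂ : HasDerivAt φ₂ d₂ (ψ x))
    (hψ : DifferentiableAt 𝕜 ψ x) (hV : DifferentiableAt 𝕜 V x) :
    lieBracket 𝕜 (fun y ↦ φ₁ (ψ y) • V y) (fun y ↦ φ₂ (ψ y) • V y) x =
      ((φ₁ (ψ x) * d₂ - φ₂ (ψ x) * d₁) * fderiv 𝕜 ψ x (V x)) • V x := by
  have h₁ : HasFDerivAt (fun y ↦ φ₁ (ψ y)) (d₁ • fderiv 𝕜 ψ x) x :=
    hφ₁.comp_hasFDerivAt x hψ.hasFDerivAt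
  have h₂ : HasFDerivAt (fun y ↦ φ₂ (ψ y)) (d₂ • fderiv 𝕜 ψ x) x :=
    hφ₂.comp_hasFDerivAt x hψ.hasFDerivAt
  rw [lieBracket_smul_smul_self h₁.differentiableAt h₂.differentiableAt hV, h₁.fderiv,
    h₂.fderiv]
  simp only [FunLike.coe_smul, Pi.smul_apply, smul_eq_mul]
  congr 1
  ring

end VectorField

lemma hasDerivAt_sqrt_mul_sin_log {t : ℝ} (ht : 0 < t) :
    HasDerivAt (fun u ↦ √u * sin (log u)) (sin (log t) / (2 * √t) + cos (log t) / √t) t := by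
  refine ((hasDerivAt_sqrt ht.ne').mul
    ((hasDerivAt_sin _).comp t (hasDerivAt_log ht.ne'))).congr_deriv ?_
  field_simp
  rw [Function.comp_apply, sq_sqrt ht.le]
  ring

lemma hasDerivAt_sqrt_mul_cos_log {t : ℝ} (ht : 0 < t) :
    HasDerivAt (fun u ↦ √u * cos (log u)) (cos (log t) / (2 * √t) - sin (log t) / √t) t := by
  refine ((hasDerivAt_sqrt ht.ne').mul
    ((hasDerivAt_cos _).comp t (hasDerivAt_log ht.ne'))).congr_deriv ?_
  field_simp
  rw [Function.comp_apply, sq_sqrt ht.le]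
  ring

lemma sqrt_mul_sin_log_wronskian {t : ℝ} (ht : 0 < t) :
    √t * sin (log t) * (cos (log t) / (2 * √t) - sin (log t) / √t) -
      √t * cos (log t) * (sin (log t) / (2 * √t) + cos (log t) / √t) = -1 := by
  have hsqrt : √t ≠ 0 := (sqrt_pos.mpr ht).ne'
  field_simp
  linear_combination (-2) * sin_sq_add_cos_sq (log t)

/-- Let `U` be open in a real normed space `E`, let `g : U → E` be a `C¹`
vector field and `ψ : U → ℝ` a `C¹` function with `ψ > 0` on `U`.  With
`f₁ = (√ψ · sin(log ψ)) • g` and `f₂ = (√ψ · cos(log ψ)) • g`, the Lie bracket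
`[f₁,f₂](x) = Df₂(x)(f₁(x)) - Df₁(x)(f₂(x))` equals `-(Dψ(x)(g(x))) • g(x)` on `U`. -/
theorem stmt18 {E : Type*} [NormedAddCommGroup E] [NormedSpace ℝ E]
    {U : Set E} (hU : IsOpen U) (g : E → E) (ψ : E → ℝ)
    (hg : ContDiffOn ℝ 1 g U) (hψ : ContDiffOn ℝ 1 ψ U) (hpos : ∀ x ∈ U, 0 < ψ x) :
    ∀ x ∈ U,
      fderiv ℝ (fun y => (Real.sqrt (ψ y) * Real.cos (Real.log (ψ y))) • g y) x
          ((Real.sqrt (ψ x) * Real.sin (Real.log (ψ x))) • g x) -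
        fderiv ℝ (fun y => (Real.sqrt (ψ y) * Real.sin (Real.log (ψ y))) • g y) x
          ((Real.sqrt (ψ x) * Real.cos (Real.log (ψ x))) • g x) =
      -(fderiv ℝ ψ x (g x)) • g x := by
  intro x hx
  have hψ_pos := hpos x hx
  have hg_diff := (hg.contDiffAt (hU.mem_nhds hx)).differentiableAt one_ne_zero
  have hψ_diff := (hψ.contDiffAt (hU.mem_nhds hx)).differentiableAt one_ne_zero
  change VectorField.lieBracket ℝ (fun y ↦ (√(ψ y) * sin (log (ψ y))) • g y)
    (fun y ↦ (√(ψ y) * cos (log (ψ y))) • g y) x = _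
  rw [VectorField.lieBracket_comp_smul_comp_smul (hasDerivAt_sqrt_mul_sin_log hψ_pos)
    (hasDerivAt_sqrt_mul_cos_log hψ_pos) hψ_diff hg_diff, sqrt_mul_sin_log_wronskian hψ_pos, neg_one_mul]
end
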